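/- arXiv:1806.04638 — 8 statements merged into one kernel-verified Lean document; each statement's English description precedes it below -/
import Mathlib

section
/- For a nest N and a fixed projection N₀ < I in N, the function i⁺(X) := inf{‖(M−N₀)X(M−N₀)‖ : M ∈ N, M > N₀} is a submultiplicative seminorm on the nest algebra T(N) dominated by the operator norm; consequently its kernel I⁺ = {X ∈ T(N) : i⁺(X) = 0} is a norm-closed two-sided ideal of T(N). -/
noncomputable section

universe u

variable {H : Type u} [NormedAddCommGroup H] [InnerProductSpace ℂ H] [CompleteSpace H]
  [TopologicalSpace.SeparableSpace H]

/-- A nest: a linearly ordered set of orthogonal projections containing `0` and `1`. -/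
structure Nest (H : Type u) [NormedAddCommGroup H] [InnerProductSpace ℂ H]
    [CompleteSpace H] where
  carrier : Set (H →L[ℂ] H)
  isProj : ∀ P ∈ carrier, IsSelfAdjoint P ∧ P * P = P
  zero_mem : (0 : H →L[ℂ] H) ∈ carrier
  one_mem : (1 : H →L[ℂ] H) ∈ carrier
  chain : ∀ P ∈ carrier, ∀ Q ∈ carrier, Q * P = P ∨ P * Q = Q

/-- Order on projections: `P ≤ Q` iff `ran P ⊆ ran Q`. -/
def projLE (P Q : H →L[ℂ] H) : Prop := Q * P = P

/-- Strict order on projections. -/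
def projLT (P Q : H →L[ℂ] H) : Prop := projLE P Q ∧ P ≠ Q

/-- The nest algebra: all bounded operators leaving invariant the range of every
projection in the nest, i.e. `(1 - P) X P = 0` for every `P` in the nest. -/
def nestAlgebra (𝒩 : Nest H) : Subalgebra ℂ (H →L[ℂ] H) where
  carrier := {X | ∀ P ∈ 𝒩.carrier, (1 - P) * X * P = 0}
  mul_mem' := by
    intro X Y hX hY P hP
    have hX' := hX P hP
    have hY' := hY P hP
    have hYP : Y * P = P * (Y * P) := by
      have h : (1 - P) * Y * P + P * Y * P = Y * P := by noncomm_ring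
      rw [hY', zero_add] at h
      rw [← mul_assoc]; exact h.symm
    calc (1 - P) * (X * Y) * P = (1 - P) * X * (Y * P) := by noncomm_ring
      _ = (1 - P) * X * (P * (Y * P)) := by rw [← hYP]
      _ = ((1 - P) * X * P) * (Y * P) := by noncomm_ring
      _ = 0 := by rw [hX', zero_mul]
  one_mem' := by
    intro P hP
    have h := (𝒩.isProj P hP).2
    calc (1 - P) * 1 * P = P - P * P := by noncomm_ring
      _ = 0 := by rw [h, sub_self]
  add_mem' := by
    intro X Y hX hY P hP
    have hX' := hX P hP
    have hY' := hY P hP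
    calc (1 - P) * (X + Y) * P = (1 - P) * X * P + (1 - P) * Y * P := by noncomm_ring
      _ = 0 := by rw [hX', hY', add_zero]
  zero_mem' := by intro P hP; simp
  algebraMap_mem' := by
    intro c P hP
    have h := (𝒩.isProj P hP).2
    have h1 : (1 - P) * 1 * P = 0 := by
      calc (1 - P) * 1 * P = P - P * P := by noncomm_ring
        _ = 0 := by rw [h, sub_self]
    calc (1 - P) * (algebraMap ℂ (H →L[ℂ] H) c) * P
        = (1 - P) * (c • (1 : H →L[ℂ] H)) * P := by rw [Algebra.algebraMap_eq_smul_one]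
      _ = c • ((1 - P) * 1 * P) := by rw [mul_smul_comm, smul_mul_assoc]
      _ = 0 := by rw [h1, smul_zero]

/-- The diagonal seminorm `i⁻_{N₀}(X) = inf { ‖(N₀-M)X(N₀-M)‖ : M ∈ 𝒩, M < N₀ }`. -/
def iMinus (𝒩 : Nest H) (N₀ X : H →L[ℂ] H) : ℝ :=
  sInf {r | ∃ M ∈ 𝒩.carrier, projLT M N₀ ∧ r = ‖(N₀ - M) * X * (N₀ - M)‖}

/-- The diagonal seminorm `i⁺_{N₀}(X) = inf { ‖(M-N₀)X(M-N₀)‖ : M ∈ 𝒩, M > N₀ }`. -/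
def iPlus (𝒩 : Nest H) (N₀ X : H →L[ℂ] H) : ℝ :=
  sInf {r | ∃ M ∈ 𝒩.carrier, projLT N₀ M ∧ r = ‖(M - N₀) * X * (M - N₀)‖}

section Aux

variable (𝒩 : Nest H) (N₀ : H →L[ℂ] H)

/-- The defining set of `iPlus`. -/
def iPlusSet (X : H →L[ℂ] H) : Set ℝ :=
  {r | ∃ M ∈ 𝒩.carrier, projLT N₀ M ∧ r = ‖(M - N₀) * X * (M - N₀)‖}

lemma iPlus_eq_sInf (X : H →L[ℂ] H) : iPlus 𝒩 N₀ X = sInf (iPlusSet 𝒩 N₀ X) := rfl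

lemma iPlusSet_nonempty (hN₀I : projLT N₀ 1) (X : H →L[ℂ] H) :
    (iPlusSet 𝒩 N₀ X).Nonempty :=
  ⟨_, 1, 𝒩.one_mem, hN₀I, rfl⟩

lemma iPlusSet_bddBelow (X : H →L[ℂ] H) : BddBelow (iPlusSet 𝒩 N₀ X) := by
  refine ⟨0, fun r hr => ?_⟩
  obtain ⟨M, _, _, rfl⟩ := hr
  exact norm_nonneg _

lemma iPlus_nonneg (X : H →L[ℂ] H) : 0 ≤ iPlus 𝒩 N₀ X := by
  apply Real.sInf_nonneg
  rintro r ⟨M, _, _, rfl⟩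
  exact norm_nonneg _

lemma iPlus_le {M : H →L[ℂ] H} (X : H →L[ℂ] H) (hM : M ∈ 𝒩.carrier)
    (h : projLT N₀ M) : iPlus 𝒩 N₀ X ≤ ‖(M - N₀) * X * (M - N₀)‖ :=
  csInf_le (iPlusSet_bddBelow 𝒩 N₀ X) ⟨M, hM, h, rfl⟩

/-- A self-adjoint idempotent has norm at most 1. -/
lemma proj_norm_le_one {E : H →L[ℂ] H} (hs : star E = E) (h2 : E * E = E) :
    ‖E‖ ≤ 1 := by
  have h : ‖star E * E‖ = ‖E‖ * ‖E‖ := CStarRing.norm_star_mul_self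
  rw [hs, h2] at h
  nlinarith [norm_nonneg E]

lemma norm_conj_le {E : H →L[ℂ] H} (hE : ‖E‖ ≤ 1) (X : H →L[ℂ] H) :
    ‖E * X * E‖ ≤ ‖X‖ := by
  have b1 : ‖E * X * E‖ ≤ ‖E * X‖ * ‖E‖ := norm_mul_le _ _
  have b2 : ‖E * X‖ ≤ ‖E‖ * ‖X‖ := norm_mul_le _ _
  nlinarith [norm_nonneg X, norm_nonneg E, norm_nonneg (E * X)]

variable {𝒩 N₀}

lemma projLE_comm {M : H →L[ℂ] H} (hN : N₀ ∈ 𝒩.carrier) (hM : M ∈ 𝒩.carrier)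
    (h : projLE N₀ M) : N₀ * M = N₀ := by
  have h' := congrArg star h
  rwa [star_mul, (𝒩.isProj M hM).1.star_eq, (𝒩.isProj N₀ hN).1.star_eq] at h'

/-- Interval facts: `E = M - N₀` is a self-adjoint idempotent of norm ≤ 1. -/
lemma interval_facts {M : H →L[ℂ] H} (hN : N₀ ∈ 𝒩.carrier) (hM : M ∈ 𝒩.carrier)
    (hle : projLE N₀ M) :
    star (M - N₀) = M - N₀ ∧ (M - N₀) * (M - N₀) = M - N₀ ∧ ‖M - N₀‖ ≤ 1 := by
  have hs : star (M - N₀) = M - N₀ :=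
    ((𝒩.isProj M hM).1.sub (𝒩.isProj N₀ hN).1).star_eq
  have h1 : M * N₀ = N₀ := hle
  have h2 : N₀ * M = N₀ := projLE_comm hN hM hle
  have h3 : M * M = M := (𝒩.isProj M hM).2
  have h4 : N₀ * N₀ = N₀ := (𝒩.isProj N₀ hN).2
  have h2' : (M - N₀) * (M - N₀) = M - N₀ := by
    have e : (M - N₀) * (M - N₀) = M * M - M * N₀ - N₀ * M + N₀ * N₀ := by
      noncomm_ring
    rw [e, h1, h2, h3, h4]; abel
  exact ⟨hs, h2', proj_norm_le_one hs h2'⟩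

/-- Nested intervals absorb. -/
lemma interval_nested {M M' : H →L[ℂ] H} (hN : N₀ ∈ 𝒩.carrier)
    (hM : M ∈ 𝒩.carrier) (hM' : M' ∈ 𝒩.carrier)
    (hle : projLE N₀ M') (hMM : projLE M' M) :
    (M - N₀) * (M' - N₀) = M' - N₀ ∧ (M' - N₀) * (M - N₀) = M' - N₀ := by
  have h1 : M' * N₀ = N₀ := hle
  have h2 : N₀ * M' = N₀ := projLE_comm hN hM' hle
  have h3 : M * M' = M' := hMM
  have h4 : M' * M = M' := projLE_comm hM' hM hMM
  have h4' : N₀ * N₀ = N₀ := (𝒩.isProj N₀ hN).2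
  have h5 : M * N₀ = N₀ := by
    calc M * N₀ = M * (M' * N₀) := by rw [h1]
      _ = (M * M') * N₀ := by rw [mul_assoc]
      _ = N₀ := by rw [h3, h1]
  have h6 : N₀ * M = N₀ := by
    calc N₀ * M = (N₀ * M') * M := by rw [h2]
      _ = N₀ * (M' * M) := by rw [mul_assoc]
      _ = N₀ := by rw [h4, h2]
  constructor
  · have e : (M - N₀) * (M' - N₀) = M * M' - M * N₀ - N₀ * M' + N₀ * N₀ := by
      noncomm_ring
    rw [e, h3, h5, h2, h4']; abel
  · have e : (M' - N₀) * (M - N₀) = M' * M - M' * N₀ - N₀ * M + N₀ * N₀ := by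
      noncomm_ring
    rw [e, h4, h1, h6, h4']; abel

/-- Passing to a smaller interval does not increase the compression norm. -/
lemma norm_comp_mono {M M' : H →L[ℂ] H} (hN : N₀ ∈ 𝒩.carrier)
    (hM : M ∈ 𝒩.carrier) (hM' : M' ∈ 𝒩.carrier)
    (hle : projLE N₀ M') (hMM : projLE M' M) (X : H →L[ℂ] H) :
    ‖(M' - N₀) * X * (M' - N₀)‖ ≤ ‖(M - N₀) * X * (M - N₀)‖ := by
  obtain ⟨hEE', hE'E⟩ := interval_nested hN hM hM' hle hMM
  obtain ⟨_, _, hE'n⟩ := interval_facts hN hM' hle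
  have key : (M' - N₀) * X * (M' - N₀)
      = (M' - N₀) * ((M - N₀) * X * (M - N₀)) * (M' - N₀) := by
    calc (M' - N₀) * X * (M' - N₀)
        = ((M' - N₀) * (M - N₀)) * X * ((M - N₀) * (M' - N₀)) := by
          rw [hE'E, hEE']
      _ = (M' - N₀) * ((M - N₀) * X * (M - N₀)) * (M' - N₀) := by noncomm_ring
  rw [key]
  exact norm_conj_le hE'n _

/-- Find a common interval nearly realizing the infima for two operators. -/
lemma exists_common (hN : N₀ ∈ 𝒩.carrier) (hN₀I : projLT N₀ 1) (X Y : H →L[ℂ] H) {ε : ℝ} (hε : 0 < ε) :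
    ∃ M ∈ 𝒩.carrier, projLT N₀ M ∧
      ‖(M - N₀) * X * (M - N₀)‖ < iPlus 𝒩 N₀ X + ε ∧
      ‖(M - N₀) * Y * (M - N₀)‖ < iPlus 𝒩 N₀ Y + ε := by
  obtain ⟨r₁, hr₁mem, hr₁⟩ :=
    Real.lt_sInf_add_pos (iPlusSet_nonempty 𝒩 N₀ hN₀I X) hε
  obtain ⟨M₁, hM₁, hlt₁, rfl⟩ := hr₁mem
  obtain ⟨r₂, hr₂mem, hr₂⟩ :=
    Real.lt_sInf_add_pos (iPlusSet_nonempty 𝒩 N₀ hN₀I Y) hε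
  obtain ⟨M₂, hM₂, hlt₂, rfl⟩ := hr₂mem
  rw [← iPlus_eq_sInf] at hr₁ hr₂
  rcases 𝒩.chain M₁ hM₁ M₂ hM₂ with h | h
  · -- M₂ * M₁ = M₁, i.e. M₁ ≤ M₂; use M₁
    refine ⟨M₁, hM₁, hlt₁, hr₁, lt_of_le_of_lt ?_ hr₂⟩
    exact norm_comp_mono hN hM₂ hM₁ hlt₁.1 h Y
  · refine ⟨M₂, hM₂, hlt₂, lt_of_le_of_lt ?_ hr₁, hr₂⟩
    exact norm_comp_mono hN hM₁ hM₂ hlt₂.1 h X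

/-- The multiplicativity identity for compressions of nest-algebra elements. -/
lemma comp_mul_comp {X Y M : H →L[ℂ] H}
    (hX : ∀ P ∈ 𝒩.carrier, (1 - P) * X * P = 0)
    (hY : ∀ P ∈ 𝒩.carrier, (1 - P) * Y * P = 0)
    (hN : N₀ ∈ 𝒩.carrier) (hM : M ∈ 𝒩.carrier) (hle : projLE N₀ M) :
    ((M - N₀) * X * (M - N₀)) * ((M - N₀) * Y * (M - N₀))
      = (M - N₀) * (X * Y) * (M - N₀) := by
  set E := M - N₀ with hE
  obtain ⟨-, hEE, -⟩ := interval_facts hN hM hle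
  have h1 : M * N₀ = N₀ := hle
  have h4 : N₀ * N₀ = N₀ := (𝒩.isProj N₀ hN).2
  have hEN : E * N₀ = 0 := by
    rw [hE, sub_mul, h1, h4, sub_self]
  -- X * N₀ = N₀ * (X * N₀)
  have hXN : X * N₀ = N₀ * (X * N₀) := by
    have e : X * N₀ - N₀ * (X * N₀) = (1 - N₀) * X * N₀ := by noncomm_ring
    rw [hX N₀ hN] at e
    exact sub_eq_zero.mp e
  have hYN : Y * N₀ = N₀ * (Y * N₀) := by
    have e : Y * N₀ - N₀ * (Y * N₀) = (1 - N₀) * Y * N₀ := by noncomm_ring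
    rw [hY N₀ hN] at e
    exact sub_eq_zero.mp e
  have hYM : M * (Y * M) = Y * M := by
    have e : Y * M - M * (Y * M) = (1 - M) * Y * M := by noncomm_ring
    rw [hY M hM] at e
    exact (sub_eq_zero.mp e).symm
  have hA : E * (X * N₀) = 0 := by
    rw [hXN, ← mul_assoc, hEN, zero_mul]
  have hB : E * X * E = E * X * M := by
    calc E * X * E = E * X * M - E * (X * N₀) := by rw [hE]; noncomm_ring
      _ = E * X * M := by rw [hA, sub_zero]
  have hC : M * (Y * E) = Y * E := by
    calc M * (Y * E) = M * (Y * M) - M * (N₀ * (Y * N₀)) := by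
          rw [← hYN, hE]; noncomm_ring
      _ = Y * M - (M * N₀) * (Y * N₀) := by rw [hYM, mul_assoc]
      _ = Y * M - N₀ * (Y * N₀) := by rw [h1]
      _ = Y * M - Y * N₀ := by rw [← hYN]
      _ = Y * E := by rw [hE]; noncomm_ring
  calc (E * X * E) * (E * Y * E) = (E * X * (E * E)) * (Y * E) := by noncomm_ring
    _ = (E * X * E) * (Y * E) := by rw [hEE]
    _ = (E * X * M) * (Y * E) := by rw [hB]
    _ = E * X * (M * (Y * E)) := by noncomm_ring
    _ = E * X * (Y * E) := by rw [hC]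
    _ = E * (X * Y) * E := by noncomm_ring

/-- `iPlus` is 1-Lipschitz. -/
lemma iPlus_lipschitz (hN : N₀ ∈ 𝒩.carrier) (hN₀I : projLT N₀ 1)
    (X Y : H →L[ℂ] H) : iPlus 𝒩 N₀ X ≤ iPlus 𝒩 N₀ Y + ‖X - Y‖ := by
  have key : ∀ r ∈ iPlusSet 𝒩 N₀ Y, iPlus 𝒩 N₀ X - ‖X - Y‖ ≤ r := by
    rintro r ⟨M, hM, hlt, rfl⟩
    obtain ⟨-, -, hEn⟩ := interval_facts hN hM hlt.1
    have e : (M - N₀) * X * (M - N₀)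
        = (M - N₀) * Y * (M - N₀) + (M - N₀) * (X - Y) * (M - N₀) := by
      noncomm_ring
    have b1 : ‖(M - N₀) * X * (M - N₀)‖
        ≤ ‖(M - N₀) * Y * (M - N₀)‖ + ‖(M - N₀) * (X - Y) * (M - N₀)‖ := by
      rw [e]; exact norm_add_le _ _
    have b2 : ‖(M - N₀) * (X - Y) * (M - N₀)‖ ≤ ‖X - Y‖ := norm_conj_le hEn _
    have b3 := iPlus_le 𝒩 N₀ X hM hlt
    linarith
  have := le_csInf (iPlusSet_nonempty 𝒩 N₀ hN₀I Y) key
  rw [← iPlus_eq_sInf] at this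
  linarith

end Aux

/-- `i⁺` is a submultiplicative seminorm on `T(𝒩)` dominated by the
operator norm, and its kernel is a norm-closed two-sided ideal of `T(𝒩)`. -/
theorem statement0 (𝒩 : Nest H) (N₀ : H →L[ℂ] H) (hN₀ : N₀ ∈ 𝒩.carrier)
    (hN₀I : projLT N₀ 1) :
    (∀ X ∈ nestAlgebra 𝒩, 0 ≤ iPlus 𝒩 N₀ X ∧ iPlus 𝒩 N₀ X ≤ ‖X‖) ∧
    (∀ X ∈ nestAlgebra 𝒩, ∀ Y ∈ nestAlgebra 𝒩,
      iPlus 𝒩 N₀ (X + Y) ≤ iPlus 𝒩 N₀ X + iPlus 𝒩 N₀ Y) ∧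
    (∀ c : ℂ, ∀ X ∈ nestAlgebra 𝒩, iPlus 𝒩 N₀ (c • X) = ‖c‖ * iPlus 𝒩 N₀ X) ∧
    (∀ X ∈ nestAlgebra 𝒩, ∀ Y ∈ nestAlgebra 𝒩,
      iPlus 𝒩 N₀ (X * Y) ≤ iPlus 𝒩 N₀ X * iPlus 𝒩 N₀ Y) ∧
    IsClosed {X : H →L[ℂ] H | X ∈ nestAlgebra 𝒩 ∧ iPlus 𝒩 N₀ X = 0} ∧
    (∀ X ∈ nestAlgebra 𝒩, ∀ Y ∈ nestAlgebra 𝒩, iPlus 𝒩 N₀ X = 0 →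
      iPlus 𝒩 N₀ Y = 0 → iPlus 𝒩 N₀ (X + Y) = 0) ∧
    (∀ c : ℂ, ∀ X ∈ nestAlgebra 𝒩, iPlus 𝒩 N₀ X = 0 → iPlus 𝒩 N₀ (c • X) = 0) ∧
    (∀ A ∈ nestAlgebra 𝒩, ∀ X ∈ nestAlgebra 𝒩, iPlus 𝒩 N₀ X = 0 →
      iPlus 𝒩 N₀ (A * X) = 0 ∧ iPlus 𝒩 N₀ (X * A) = 0) := by
  have hnn : ∀ X : H →L[ℂ] H, 0 ≤ iPlus 𝒩 N₀ X := iPlus_nonneg 𝒩 N₀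
  have hdom : ∀ X : H →L[ℂ] H, iPlus 𝒩 N₀ X ≤ ‖X‖ := by
    intro X
    obtain ⟨-, -, hEn⟩ := interval_facts hN₀ 𝒩.one_mem hN₀I.1
    exact (iPlus_le 𝒩 N₀ X 𝒩.one_mem hN₀I).trans (norm_conj_le hEn X)
  have hadd : ∀ X Y : H →L[ℂ] H,
      iPlus 𝒩 N₀ (X + Y) ≤ iPlus 𝒩 N₀ X + iPlus 𝒩 N₀ Y := by
    intro X Y
    apply le_of_forall_pos_le_add
    intro ε hε
    obtain ⟨M, hM, hlt, hx, hy⟩ := exists_common hN₀ hN₀I X Y (half_pos hε)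
    have b0 := iPlus_le 𝒩 N₀ (X + Y) hM hlt
    have e : (M - N₀) * (X + Y) * (M - N₀)
        = (M - N₀) * X * (M - N₀) + (M - N₀) * Y * (M - N₀) := by noncomm_ring
    have b1 : ‖(M - N₀) * (X + Y) * (M - N₀)‖
        ≤ ‖(M - N₀) * X * (M - N₀)‖ + ‖(M - N₀) * Y * (M - N₀)‖ := by
      rw [e]; exact norm_add_le _ _
    linarith
  have hsmul : ∀ (c : ℂ) (X : H →L[ℂ] H),
      iPlus 𝒩 N₀ (c • X) = ‖c‖ * iPlus 𝒩 N₀ X := by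
    intro c X
    have hcomm : ∀ M : H →L[ℂ] H,
        (M - N₀) * (c • X) * (M - N₀) = c • ((M - N₀) * X * (M - N₀)) := by
      intro M; rw [mul_smul_comm, smul_mul_assoc]
    rcases eq_or_ne c 0 with rfl | hc
    · simp only [zero_smul, norm_zero, zero_mul]
      refine le_antisymm ?_ (hnn 0)
      have := iPlus_le 𝒩 N₀ (0 : H →L[ℂ] H) 𝒩.one_mem hN₀I
      simpa using this
    · have hck : (0 : ℝ) < ‖c‖ := norm_pos_iff.mpr hc
      apply le_antisymm
      · have hdivle : iPlus 𝒩 N₀ (c • X) / ‖c‖ ≤ iPlus 𝒩 N₀ X := by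
          rw [iPlus_eq_sInf 𝒩 N₀ X]
          apply le_csInf (iPlusSet_nonempty 𝒩 N₀ hN₀I X)
          rintro r ⟨M, hM, hlt, rfl⟩
          have b := iPlus_le 𝒩 N₀ (c • X) hM hlt
          rw [hcomm M, norm_smul] at b
          rw [div_le_iff₀ hck, mul_comm]
          exact b
        calc iPlus 𝒩 N₀ (c • X) = ‖c‖ * (iPlus 𝒩 N₀ (c • X) / ‖c‖) := by
              rw [mul_comm, div_mul_cancel₀ _ hck.ne']
          _ ≤ ‖c‖ * iPlus 𝒩 N₀ X := mul_le_mul_of_nonneg_left hdivle hck.le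
      · rw [iPlus_eq_sInf 𝒩 N₀ (c • X)]
        apply le_csInf (iPlusSet_nonempty 𝒩 N₀ hN₀I (c • X))
        rintro r ⟨M, hM, hlt, rfl⟩
        rw [hcomm M, norm_smul]
        exact mul_le_mul_of_nonneg_left (iPlus_le 𝒩 N₀ X hM hlt) (norm_nonneg c)
  have hmul : ∀ X ∈ nestAlgebra 𝒩, ∀ Y ∈ nestAlgebra 𝒩,
      iPlus 𝒩 N₀ (X * Y) ≤ iPlus 𝒩 N₀ X * iPlus 𝒩 N₀ Y := by
    intro X hX Y hY
    apply le_of_forall_pos_le_add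
    intro δ hδ
    have ha := hnn X
    have hb := hnn Y
    have hab1 : (0 : ℝ) < iPlus 𝒩 N₀ X + iPlus 𝒩 N₀ Y + 1 := by linarith
    obtain ⟨ε, hε0, hε1, hεδ⟩ : ∃ ε : ℝ, 0 < ε ∧ ε ≤ 1 ∧
        ε * (iPlus 𝒩 N₀ X + iPlus 𝒩 N₀ Y + 1) ≤ δ := by
      refine ⟨min 1 (δ / (iPlus 𝒩 N₀ X + iPlus 𝒩 N₀ Y + 1)),
        lt_min one_pos (div_pos hδ hab1), min_le_left _ _, ?_⟩
      calc min 1 (δ / (iPlus 𝒩 N₀ X + iPlus 𝒩 N₀ Y + 1))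
            * (iPlus 𝒩 N₀ X + iPlus 𝒩 N₀ Y + 1)
          ≤ (δ / (iPlus 𝒩 N₀ X + iPlus 𝒩 N₀ Y + 1))
            * (iPlus 𝒩 N₀ X + iPlus 𝒩 N₀ Y + 1) :=
            mul_le_mul_of_nonneg_right (min_le_right _ _) hab1.le
        _ = δ := div_mul_cancel₀ _ hab1.ne'
    obtain ⟨M, hM, hlt, hx, hy⟩ := exists_common hN₀ hN₀I X Y hε0
    have key := comp_mul_comp (𝒩 := 𝒩) (N₀ := N₀) hX hY hN₀ hM hlt.1
    have b0 := iPlus_le 𝒩 N₀ (X * Y) hM hlt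
    have bmul : ‖(M - N₀) * (X * Y) * (M - N₀)‖
        ≤ ‖(M - N₀) * X * (M - N₀)‖ * ‖(M - N₀) * Y * (M - N₀)‖ := by
      rw [← key]; exact norm_mul_le _ _
    have hxn := norm_nonneg ((M - N₀) * X * (M - N₀))
    have hyn := norm_nonneg ((M - N₀) * Y * (M - N₀))
    have bprod : ‖(M - N₀) * X * (M - N₀)‖ * ‖(M - N₀) * Y * (M - N₀)‖
        ≤ (iPlus 𝒩 N₀ X + ε) * (iPlus 𝒩 N₀ Y + ε) :=
      mul_le_mul hx.le hy.le hyn (by linarith)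
    have hεε : ε * ε ≤ ε := mul_le_of_le_one_left hε0.le hε1
    nlinarith [bprod, hεδ, hεε, ha, hb, hε0.le]
  have hclosed : IsClosed {X : H →L[ℂ] H | X ∈ nestAlgebra 𝒩 ∧ iPlus 𝒩 N₀ X = 0} := by
    have h1 : IsClosed {X : H →L[ℂ] H | X ∈ nestAlgebra 𝒩} := by
      have heq : {X : H →L[ℂ] H | X ∈ nestAlgebra 𝒩}
          = ⋂ P ∈ 𝒩.carrier, {X : H →L[ℂ] H | (1 - P) * X * P = 0} := by
        ext X
        simp only [Set.mem_setOf_eq, Set.mem_iInter]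
        exact Iff.rfl
      rw [heq]
      refine isClosed_biInter fun P hP => ?_
      exact isClosed_eq ((continuous_const.mul continuous_id).mul continuous_const)
        continuous_const
    have hcont : Continuous (iPlus 𝒩 N₀) := by
      have hl : LipschitzWith 1 (iPlus 𝒩 N₀) := by
        apply LipschitzWith.of_dist_le_mul
        intro X Y
        rw [NNReal.coe_one, one_mul, Real.dist_eq, dist_eq_norm]
        have hL1 := iPlus_lipschitz hN₀ hN₀I X Y
        have hL2 := iPlus_lipschitz hN₀ hN₀I Y X
        have hrev : ‖Y - X‖ = ‖X - Y‖ := norm_sub_rev _ _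
        rw [abs_le]
        constructor <;> linarith
      exact hl.continuous
    have h2 : IsClosed {X : H →L[ℂ] H | iPlus 𝒩 N₀ X = 0} :=
      isClosed_eq hcont continuous_const
    exact h1.inter h2
  refine ⟨fun X _ => ⟨hnn X, hdom X⟩, fun X _ Y _ => hadd X Y,
    fun c X _ => hsmul c X, hmul, hclosed, ?_, ?_, ?_⟩
  · intro X _ Y _ h0X h0Y
    refine le_antisymm ?_ (hnn _)
    have := hadd X Y
    linarith
  · intro c X _ h0
    rw [hsmul c X, h0, mul_zero]
  · intro A hA X hX h0
    constructor
    · refine le_antisymm ?_ (hnn _)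
      have := hmul A hA X hX
      rw [h0, mul_zero] at this; exact this
    · refine le_antisymm ?_ (hnn _)
      have := hmul X hX A hA
      rw [h0, zero_mul] at this; exact this
end
end

section
/- Let N be a nest with an atom E = N₀ − N₀⁻ (N₀ ∈ N, N₀ > N₀⁻). Then the map X ↦ E X restricted to the range of E is an algebra homomorphism from T(N) onto B(E H) whose kernel is the diagonal ideal I⁻_{N₀} = {X ∈ T(N) : E X E = 0}; in particular I⁻_{N₀} is a primitive ideal of T(N). -/
noncomputable section

universe u

variable {H : Type u} [NormedAddCommGroup H] [InnerProductSpace ℂ H] [CompleteSpace H]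
  [TopologicalSpace.SeparableSpace H]

/-- A (left) primitive ideal of a unital ring: the kernel of the left regular
representation on the quotient by a maximal left ideal, i.e. the largest two-sided
ideal `{x | x·R ⊆ L}` contained in a maximal left ideal `L`. -/
def IsLeftPrimitive (R : Type*) [Ring R] (P : Set R) : Prop :=
  ∃ L : Ideal R, L.IsMaximal ∧ P = {x : R | ∀ r : R, x * r ∈ L}

section ringHelpers

/-!
Write `E = N₀ - N₀⁻`. Every `P ∈ 𝒩` satisfies `P ≤ N₀⁻` or `N₀ ≤ P`, so `E X E` lies in `T(𝒩)` for
every operator `X`, and `T(𝒩)` compresses onto all of `B(E H)`. Since `X ∈ T(𝒩)` maps `N₀⁻ H` into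
itself and `Y ∈ T(𝒩)` maps `N₀ H` into itself, `E X (1 - E) Y E = 0`, which makes the compression
multiplicative. The infimum defining `i⁻_{N₀}` is attained at `M = N₀⁻`, because `E ≤ N₀ - M` for
every `M < N₀`.

For `0 ≠ e ∈ E H`, the left ideal `{X | E X e = 0}` of `T(𝒩)` is maximal: if `E X e ≠ 0`, some
compression `T` maps `X e` back to `e`, so `T X - 1` lies in it. Its largest two-sided ideal is the
kernel of the compression, because `{E r e | r ∈ T(𝒩)}` is all of `E H`.
-/

section Ring

variable {R : Type*} [Ring R] {p q x y : R}

theorem mul_eq_mul_mul_of_one_sub_mul_mul_eq_zero (h : (1 - p) * x * p = 0) :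
    x * p = p * x * p := by
  rwa [sub_mul, sub_mul, one_mul, sub_eq_zero] at h

theorem compress_mul_of_invariant (hp : IsIdempotentElem p) (hq : IsIdempotentElem q)
    (hpq : p * q = p) (hqp : q * p = p) (hx : (1 - p) * x * p = 0) (hy : (1 - q) * y * q = 0) :
    (q - p) * (x * y) * (q - p) = (q - p) * x * (q - p) * ((q - p) * y * (q - p)) := by
  have he : (q - p) * (q - p) = q - p := by
    rw [sub_mul, mul_sub, mul_sub, hp.eq, hq.eq, hpq, hqp]; abel
  have hxp : (q - p) * x * p = 0 := by
    rw [mul_assoc, mul_eq_mul_mul_of_one_sub_mul_mul_eq_zero hx, ← mul_assoc, ← mul_assoc,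
      sub_mul, hqp, hp.eq, sub_self, zero_mul, zero_mul]
  have hqy : (1 - q) * y * (q - p) = 0 := by
    have hqe : q - p = q * (q - p) := by rw [mul_sub, hq.eq, hqp]
    rw [hqe, ← mul_assoc, hy, zero_mul]
  calc (q - p) * (x * y) * (q - p)
      = (q - p) * x * ((q - p) * (q - p)) * y * (q - p) + (q - p) * x * p * (y * (q - p))
          + (q - p) * x * ((1 - q) * y * (q - p)) := by rw [he]; noncomm_ring
    _ = (q - p) * x * (q - p) * ((q - p) * y * (q - p)) := by
        rw [hxp, hqy]; noncomm_ring

theorem Ideal.isMaximal_of_exists_mul_sub_one_mem {I : Ideal R} (h1 : (1 : R) ∉ I)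
    (h : ∀ x ∉ I, ∃ y, y * x - 1 ∈ I) : I.IsMaximal := by
  refine Ideal.isMaximal_iff.mpr ⟨h1, fun J x hIJ hx hxJ => ?_⟩
  obtain ⟨y, hy⟩ := h x hx
  simpa using J.sub_mem (J.mul_mem_left y hxJ) (hIJ hy)

end Ring

theorem IsStarProjection.norm_mul_mul_le {A : Type*} [NormedRing A] [StarRing A] [CStarRing A]
    {e : A} (he : IsStarProjection e) (a : A) : ‖e * a * e‖ ≤ ‖a‖ :=
  calc ‖e * a * e‖ ≤ ‖e‖ * ‖a‖ * ‖e‖ := norm_mul₃_le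
    _ ≤ 1 * ‖a‖ * 1 := by gcongr <;> exact he.norm_le e
    _ = ‖a‖ := by ring

namespace Nest

variable {V : Type*} [NormedAddCommGroup V] [InnerProductSpace ℂ V] [CompleteSpace V]
  {𝒩 : Nest V} {P Q : V →L[ℂ] V}

theorem isStarProjection_of_mem (hP : P ∈ 𝒩.carrier) : IsStarProjection P :=
  ⟨(𝒩.isProj P hP).2, (𝒩.isProj P hP).1⟩

theorem mul_eq_left_of_projLE (hP : P ∈ 𝒩.carrier) (hQ : Q ∈ 𝒩.carrier) (h : projLE P Q) :
    P * Q = P := by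
  simpa [(isStarProjection_of_mem hP).isSelfAdjoint.star_eq,
    (isStarProjection_of_mem hQ).isSelfAdjoint.star_eq] using congr(star $h)

/-- `N₀ - Nm` is an atom of `𝒩`, with `Nm = N₀⁻`. -/
structure IsAtom (𝒩 : Nest V) (N₀ Nm : V →L[ℂ] V) : Prop where
  mem : N₀ ∈ 𝒩.carrier
  pred_mem : Nm ∈ 𝒩.carrier
  pred_lt : projLT Nm N₀
  le_pred : ∀ M ∈ 𝒩.carrier, projLT M N₀ → projLE M Nm

namespace IsAtom

variable {N₀ Nm : V →L[ℂ] V}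

theorem isStarProjection (h : 𝒩.IsAtom N₀ Nm) : IsStarProjection (N₀ - Nm) :=
  (isStarProjection_of_mem h.pred_mem).sub_of_mul_eq_right (isStarProjection_of_mem h.mem)
    h.pred_lt.1

theorem projLE_pred_or_projLE (h : 𝒩.IsAtom N₀ Nm) (hP : P ∈ 𝒩.carrier) :
    projLE P Nm ∨ projLE N₀ P := by
  rcases 𝒩.chain P hP N₀ h.mem with hPN | hNP
  · by_cases hPeq : P = N₀
    · exact .inr (hPeq ▸ (𝒩.isProj P hP).2)
    · exact .inl (h.le_pred P hP ⟨hPN, hPeq⟩)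
  · exact .inr hNP

theorem compress_mem_nestAlgebra (h : 𝒩.IsAtom N₀ Nm) (T : V →L[ℂ] V) :
    (N₀ - Nm) * T * (N₀ - Nm) ∈ nestAlgebra 𝒩 := by
  intro P hP
  rcases h.projLE_pred_or_projLE hP with hPm | hNP
  · have hEP : (N₀ - Nm) * P = 0 := by
      have hPN : N₀ * P = P := by rw [← hPm, ← mul_assoc, h.pred_lt.1]
      rw [sub_mul, hPN, hPm, sub_self]
    simp only [mul_assoc, hEP, mul_zero]
  · have hPE : (1 - P) * (N₀ - Nm) = 0 := by
      have hPNm : P * Nm = Nm := by rw [← h.pred_lt.1, ← mul_assoc, hNP]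
      rw [sub_mul, mul_sub, mul_sub, one_mul, one_mul, hNP, hPNm, sub_self]
    rw [← mul_assoc, ← mul_assoc, hPE, zero_mul, zero_mul, zero_mul]

theorem compress_mul (h : 𝒩.IsAtom N₀ Nm) {X Y : V →L[ℂ] V} (hX : X ∈ nestAlgebra 𝒩)
    (hY : Y ∈ nestAlgebra 𝒩) :
    (N₀ - Nm) * (X * Y) * (N₀ - Nm) =
      (N₀ - Nm) * X * (N₀ - Nm) * ((N₀ - Nm) * Y * (N₀ - Nm)) :=
  compress_mul_of_invariant (isStarProjection_of_mem h.pred_mem).isIdempotentElem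
    (isStarProjection_of_mem h.mem).isIdempotentElem
    (mul_eq_left_of_projLE h.pred_mem h.mem h.pred_lt.1) h.pred_lt.1
    (hX Nm h.pred_mem) (hY N₀ h.mem)

theorem iMinus_eq (h : 𝒩.IsAtom N₀ Nm) (X : V →L[ℂ] V) :
    iMinus 𝒩 N₀ X = ‖(N₀ - Nm) * X * (N₀ - Nm)‖ := by
  have hlb : ∀ r ∈ {r | ∃ M ∈ 𝒩.carrier, projLT M N₀ ∧ r = ‖(N₀ - M) * X * (N₀ - M)‖},
      ‖(N₀ - Nm) * X * (N₀ - Nm)‖ ≤ r := by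
    rintro r ⟨M, hM, hMN, rfl⟩
    have hMNm : projLE M Nm := h.le_pred M hM hMN
    have hN₀ := (isStarProjection_of_mem h.mem).isIdempotentElem.eq
    have hEF : (N₀ - Nm) * (N₀ - M) = N₀ - Nm := by
      rw [sub_mul, mul_sub, mul_sub, hN₀, hMN.1, mul_eq_left_of_projLE h.pred_mem h.mem h.pred_lt.1,
        hMNm]
      abel
    have hFE : (N₀ - M) * (N₀ - Nm) = N₀ - Nm := by
      rw [sub_mul, mul_sub, mul_sub, hN₀, h.pred_lt.1, mul_eq_left_of_projLE hM h.mem hMN.1,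
        mul_eq_left_of_projLE hM h.pred_mem hMNm]
      abel
    calc ‖(N₀ - Nm) * X * (N₀ - Nm)‖
        = ‖(N₀ - Nm) * (N₀ - M) * X * ((N₀ - M) * (N₀ - Nm))‖ := by rw [hEF, hFE]
      _ = ‖(N₀ - Nm) * ((N₀ - M) * X * (N₀ - M)) * (N₀ - Nm)‖ := by simp only [mul_assoc]
      _ ≤ ‖(N₀ - M) * X * (N₀ - M)‖ := h.isStarProjection.norm_mul_mul_le _
  have hmem : ‖(N₀ - Nm) * X * (N₀ - Nm)‖ ∈
      {r | ∃ M ∈ 𝒩.carrier, projLT M N₀ ∧ r = ‖(N₀ - M) * X * (N₀ - M)‖} :=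
    ⟨Nm, h.pred_mem, h.pred_lt, rfl⟩
  exact le_antisymm (csInf_le ⟨_, hlb⟩ hmem) (le_csInf ⟨_, hmem⟩ hlb)

theorem exists_mem_nestAlgebra_apply_eq (h : 𝒩.IsAtom N₀ Nm) {u : V} (hu : (N₀ - Nm) u ≠ 0)
    (w : V) : ∃ T ∈ nestAlgebra 𝒩, T u = (N₀ - Nm) w := by
  obtain ⟨f, hf⟩ := SeparatingDual.exists_eq_one (R := ℂ) hu
  refine ⟨(N₀ - Nm) * f.smulRight w * (N₀ - Nm), h.compress_mem_nestAlgebra _, ?_⟩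
  simp only [mul_apply_eq_comp, ContinuousLinearMap.smulRight_apply, hf, one_smul]

/-- The annihilator of `E e` in the `T(𝒩)`-module `E H` on which `X` acts by `v ↦ E X v`. -/
def annihilator (h : 𝒩.IsAtom N₀ Nm) (e : V) : Ideal (nestAlgebra 𝒩) where
  carrier := {X | (N₀ - Nm) ((X : V →L[ℂ] V) ((N₀ - Nm) e)) = 0}
  add_mem' {X Y} hX hY := by
    simp only [Set.mem_ofPred_eq, Subalgebra.coe_add, add_apply, map_add] at *
    rw [hX, hY, add_zero]
  zero_mem' := by simp
  smul_mem' T X hX := by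
    have hTX := congr($(h.compress_mul T.2 X.2) e)
    simp only [mul_apply_eq_comp] at hTX
    change (N₀ - Nm) ((T : V →L[ℂ] V) ((X : V →L[ℂ] V) ((N₀ - Nm) e))) = 0
    rw [hTX, hX]
    simp only [map_zero]

theorem annihilator_isMaximal (h : 𝒩.IsAtom N₀ Nm) {e : V} (he : (N₀ - Nm) e ≠ 0) :
    (h.annihilator e).IsMaximal := by
  have hE := h.isStarProjection.isIdempotentElem
  refine Ideal.isMaximal_of_exists_mul_sub_one_mem ?_ fun X hX => ?_
  · change (N₀ - Nm) ((1 : V →L[ℂ] V) ((N₀ - Nm) e)) ≠ 0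
    rwa [one_apply_eq_self, ← mul_apply_eq_comp, hE.eq]
  · obtain ⟨T, hT, hTX⟩ := h.exists_mem_nestAlgebra_apply_eq hX e
    refine ⟨⟨T, hT⟩, ?_⟩
    change (N₀ - Nm) ((T * X - 1 : V →L[ℂ] V) ((N₀ - Nm) e)) = 0
    rw [sub_apply (T * X), mul_apply_eq_comp, hTX, one_apply_eq_self, sub_self, map_zero]

theorem setOf_forall_mul_mem_annihilator (h : 𝒩.IsAtom N₀ Nm) {e : V}
    (he : (N₀ - Nm) e ≠ 0) :
    {X : nestAlgebra 𝒩 | ∀ r, X * r ∈ h.annihilator e} =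
      {X : nestAlgebra 𝒩 | (N₀ - Nm) * (X : V →L[ℂ] V) * (N₀ - Nm) = 0} := by
  ext X
  constructor
  · intro hX
    have hEe : (N₀ - Nm) ((N₀ - Nm) e) ≠ 0 := by
      rwa [← mul_apply_eq_comp, h.isStarProjection.isIdempotentElem.eq]
    ext u
    obtain ⟨r, hr, hre⟩ := h.exists_mem_nestAlgebra_apply_eq hEe u
    have hXr : (N₀ - Nm) ((X : V →L[ℂ] V) (r ((N₀ - Nm) e))) = 0 := hX ⟨r, hr⟩
    rwa [hre] at hXr
  · intro hX r
    have hXr := congr($(h.compress_mul X.2 r.2) e)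
    rw [Set.mem_ofPred_eq.mp hX, zero_mul, zero_apply, mul_apply_eq_comp, mul_apply_eq_comp] at hXr
    exact hXr

theorem isLeftPrimitive (h : 𝒩.IsAtom N₀ Nm) :
    IsLeftPrimitive (nestAlgebra 𝒩)
      {X : nestAlgebra 𝒩 | (N₀ - Nm) * (X : V →L[ℂ] V) * (N₀ - Nm) = 0} := by
  obtain ⟨e, he⟩ := DFunLike.ne_iff.mp (sub_ne_zero.mpr h.pred_lt.2.symm)
  exact ⟨h.annihilator e, h.annihilator_isMaximal he, (h.setOf_forall_mul_mem_annihilator he).symm⟩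

end IsAtom

end Nest

/-- for an atom `E = N₀ - N₀⁻` (with `Nm = N₀⁻`), the compression
`X ↦ E X E` (i.e. `E X` restricted to the range of `E`) is multiplicative on `T(𝒩)`,
maps `T(𝒩)` onto `B(E H)`, has kernel the diagonal ideal
`I⁻_{N₀} = {X ∈ T(𝒩) : E X E = 0}`; in particular `I⁻_{N₀}` is a primitive ideal. -/
theorem statement2 (𝒩 : Nest H) (N₀ Nm : H →L[ℂ] H)
    (hN₀ : N₀ ∈ 𝒩.carrier) (hNm : Nm ∈ 𝒩.carrier) (hlt : projLT Nm N₀)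
    (hmax : ∀ M ∈ 𝒩.carrier, projLT M N₀ → projLE M Nm) :
    (∀ X Y : nestAlgebra 𝒩,
      (N₀ - Nm) * ((X : H →L[ℂ] H) * (Y : H →L[ℂ] H)) * (N₀ - Nm) =
        ((N₀ - Nm) * (X : H →L[ℂ] H) * (N₀ - Nm)) *
          ((N₀ - Nm) * (Y : H →L[ℂ] H) * (N₀ - Nm))) ∧
    (∀ T : H →L[ℂ] H, T = (N₀ - Nm) * T * (N₀ - Nm) →
      ∃ X ∈ nestAlgebra 𝒩, (N₀ - Nm) * X * (N₀ - Nm) = T) ∧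
    ({X : nestAlgebra 𝒩 | (N₀ - Nm) * (X : H →L[ℂ] H) * (N₀ - Nm) = 0} =
      {X : nestAlgebra 𝒩 | iMinus 𝒩 N₀ (X : H →L[ℂ] H) = 0}) ∧
    IsLeftPrimitive (nestAlgebra 𝒩)
      {X : nestAlgebra 𝒩 | iMinus 𝒩 N₀ (X : H →L[ℂ] H) = 0} := by
  have h : 𝒩.IsAtom N₀ Nm := ⟨hN₀, hNm, hlt, hmax⟩
  have hker : {X : nestAlgebra 𝒩 | (N₀ - Nm) * (X : H →L[ℂ] H) * (N₀ - Nm) = 0} =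
      {X : nestAlgebra 𝒩 | iMinus 𝒩 N₀ (X : H →L[ℂ] H) = 0} := by
    simp only [h.iMinus_eq, norm_eq_zero]
  exact ⟨fun X Y => h.compress_mul X.2 Y.2,
    fun T hT => ⟨T, hT ▸ h.compress_mem_nestAlgebra T, hT.symm⟩, hker, hker ▸ h.isLeftPrimitive⟩
end ringHelpers
end
end

section
/- Let N be a nest on a separable Hilbert space and let (N_α, x_α)_{α∈A} be a net in N × H. The set L := {X ∈ T(N) : lim_α ‖(I − N_α) X x_α‖ = 0} is a left ideal of T(N); moreover L = T(N) if and only if lim_α (I − N_α) x_α = 0. -/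
noncomputable section

universe u

variable {H : Type u} [NormedAddCommGroup H] [InnerProductSpace ℂ H] [CompleteSpace H]
  [TopologicalSpace.SeparableSpace H]

/-- The left ideal specified by a net `(N_α, x_α)`:
`{X ∈ T(𝒩) : lim_α ‖(I - N_α) X x_α‖ = 0}`. -/
def constructedIdeal (𝒩 : Nest H) {A : Type u} [Preorder A]
    (Nf : A → H →L[ℂ] H) (x : A → H) : Set (H →L[ℂ] H) :=
  {X | X ∈ nestAlgebra 𝒩 ∧
    Filter.Tendsto (fun α => ‖(1 - Nf α) (X (x α))‖) Filter.atTop (nhds 0)}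

/-- `L` is a left ideal of the nest algebra `T(𝒩)`. -/
def IsLeftIdealOf (𝒩 : Nest H) (L : Set (H →L[ℂ] H)) : Prop :=
  L ⊆ (nestAlgebra 𝒩 : Set (H →L[ℂ] H)) ∧ (0 : H →L[ℂ] H) ∈ L ∧
    (∀ X ∈ L, ∀ Y ∈ L, X + Y ∈ L) ∧ (∀ c : ℂ, ∀ X ∈ L, c • X ∈ L) ∧
    (∀ T ∈ nestAlgebra 𝒩, ∀ X ∈ L, T * X ∈ L)

/-- A left ideal is constructible if it is specified by some net `(N_α, x_α)` in `𝒩 × H`. -/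
def IsConstructible (𝒩 : Nest H) (L : Set (H →L[ℂ] H)) : Prop :=
  ∃ (A : Type u) (_ : Preorder A) (_ : IsDirected A (· ≤ ·)) (_ : Nonempty A)
    (Nf : A → H →L[ℂ] H) (x : A → H),
    (∀ α, Nf α ∈ 𝒩.carrier) ∧ L = constructedIdeal 𝒩 Nf x

/-- A left ideal is strongly constructible if it is specified by some net `(N_α, x_α)`
in which every vector `x_α = (I - N_α) x_α` is a unit vector. -/
def IsStronglyConstructible (𝒩 : Nest H) (L : Set (H →L[ℂ] H)) : Prop :=
  ∃ (A : Type u) (_ : Preorder A) (_ : IsDirected A (· ≤ ·)) (_ : Nonempty A)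
    (Nf : A → H →L[ℂ] H) (x : A → H),
    (∀ α, Nf α ∈ 𝒩.carrier) ∧ (∀ α, ‖x α‖ = 1) ∧ (∀ α, (1 - Nf α) (x α) = x α) ∧
    L = constructedIdeal 𝒩 Nf x

/-! Every `X ∈ T(𝒩)` satisfies `(1 - P) X = (1 - P) X (1 - P)` for `P ∈ 𝒩`, and `1 - P` is a
projection, so `‖(1 - N_α) X v‖ ≤ ‖X‖ ‖(1 - N_α) v‖`. Taking `v = Y x_α` with `Y ∈ L` makes `L`
stable under left multiplication by `T(𝒩)`; taking `v = x_α` shows that `(1 - N_α) x_α → 0`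
puts all of `T(𝒩)` into `L`. Conversely `1 ∈ L` says exactly that `(1 - N_α) x_α → 0`. -/

theorem one_sub_mul_eq_one_sub_mul_mul_one_sub {R : Type*} [Ring R] {p x : R}
    (h : (1 - p) * x * p = 0) : (1 - p) * x = (1 - p) * x * (1 - p) := by
  rw [mul_sub, mul_one, h, sub_zero]

section

variable {E : Type u} [NormedAddCommGroup E] [InnerProductSpace ℂ E] [CompleteSpace E]
  {𝒩 : Nest E}

theorem Nest.isStarProjection_of_mem_s4 {P : E →L[ℂ] E} (hP : P ∈ 𝒩.carrier) :
    IsStarProjection P :=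
  ⟨(𝒩.isProj P hP).2, (𝒩.isProj P hP).1⟩

theorem norm_one_sub_apply_le_of_mem_nestAlgebra {T P : E →L[ℂ] E} (hT : T ∈ nestAlgebra 𝒩)
    (hP : P ∈ 𝒩.carrier) (v : E) : ‖(1 - P) (T v)‖ ≤ ‖T‖ * ‖(1 - P) v‖ := by
  have hcomp : (1 - P) * T = (1 - P) * T * (1 - P) :=
    one_sub_mul_eq_one_sub_mul_mul_one_sub (hT P hP)
  calc ‖(1 - P) (T v)‖ = ‖(1 - P) (T ((1 - P) v))‖ := congrArg norm (DFunLike.congr_fun hcomp v)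
    _ ≤ 1 * ‖T ((1 - P) v)‖ :=
      (1 - P).le_of_opNorm_le ((Nest.isStarProjection_of_mem_s4 hP).one_sub.norm_le _) _
    _ ≤ ‖T‖ * ‖(1 - P) v‖ := by rw [one_mul]; exact T.le_opNorm _

theorem tendsto_one_sub_apply_of_mem_nestAlgebra {A : Type*} {l : Filter A}
    {Nf : A → E →L[ℂ] E} (hNf : ∀ α, Nf α ∈ 𝒩.carrier) {T : E →L[ℂ] E}
    (hT : T ∈ nestAlgebra 𝒩) {y : A → E}
    (hy : Filter.Tendsto (fun α => (1 - Nf α) (y α)) l (nhds 0)) :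
    Filter.Tendsto (fun α => (1 - Nf α) (T (y α))) l (nhds 0) :=
  squeeze_zero_norm (fun α => norm_one_sub_apply_le_of_mem_nestAlgebra hT (hNf α) (y α))
    (by simpa using (tendsto_norm_zero.comp hy).const_mul ‖T‖)

theorem mem_constructedIdeal_iff {A : Type u} [Preorder A] {Nf : A → E →L[ℂ] E} {x : A → E}
    {X : E →L[ℂ] E} :
    X ∈ constructedIdeal 𝒩 Nf x ↔ X ∈ nestAlgebra 𝒩 ∧
      Filter.Tendsto (fun α => (1 - Nf α) (X (x α))) Filter.atTop (nhds 0) := by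
  rw [tendsto_zero_iff_norm_tendsto_zero]
  rfl

theorem isLeftIdealOf_constructedIdeal {A : Type u} [Preorder A] {Nf : A → E →L[ℂ] E}
    (hNf : ∀ α, Nf α ∈ 𝒩.carrier) (x : A → E) :
    IsLeftIdealOf 𝒩 (constructedIdeal 𝒩 Nf x) := by
  refine ⟨fun X hX => hX.1,
    mem_constructedIdeal_iff.2 ⟨zero_mem _, by simpa using tendsto_const_nhds⟩, ?_, ?_, ?_⟩ <;>
    simp only [mem_constructedIdeal_iff]
  · rintro X ⟨hX, hXt⟩ Y ⟨hY, hYt⟩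
    refine ⟨add_mem hX hY, ?_⟩
    simpa only [add_apply, map_add, add_zero] using hXt.add hYt
  · rintro c X ⟨hX, hXt⟩
    refine ⟨(nestAlgebra 𝒩).smul_mem hX c, ?_⟩
    simpa only [smul_apply, map_smul, smul_zero] using hXt.const_smul c
  · rintro T hT X ⟨hX, hXt⟩
    exact ⟨mul_mem hT hX, tendsto_one_sub_apply_of_mem_nestAlgebra hNf hT hXt⟩

end

theorem statement4_general (𝒩 : Nest H) {A : Type u} [Preorder A]
    (Nf : A → H →L[ℂ] H) (hNf : ∀ α, Nf α ∈ 𝒩.carrier) (x : A → H) :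
    IsLeftIdealOf 𝒩 (constructedIdeal 𝒩 Nf x) ∧
    (constructedIdeal 𝒩 Nf x = (nestAlgebra 𝒩 : Set (H →L[ℂ] H)) ↔
      Filter.Tendsto (fun α => (1 - Nf α) (x α)) Filter.atTop (nhds 0)) := by
  have hL := isLeftIdealOf_constructedIdeal hNf x
  refine ⟨hL, fun hEq => ?_, fun hlim => ?_⟩
  · have hone : (1 : H →L[ℂ] H) ∈ constructedIdeal 𝒩 Nf x := hEq ▸ (nestAlgebra 𝒩).one_mem
    simpa using (mem_constructedIdeal_iff.1 hone).2
  · exact hL.1.antisymm fun X hX =>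
      mem_constructedIdeal_iff.2 ⟨hX, tendsto_one_sub_apply_of_mem_nestAlgebra hNf hX hlim⟩

/-- the set `L = {X ∈ T(𝒩) : lim_α ‖(I - N_α) X x_α‖ = 0}` determined by
a net `(N_α, x_α)` in `𝒩 × H` is a left ideal of `T(𝒩)`, and `L = T(𝒩)` iff
`lim_α (I - N_α) x_α = 0`. -/
theorem statement4 (𝒩 : Nest H) {A : Type u} [Preorder A] [IsDirected A (· ≤ ·)]
    [Nonempty A] (Nf : A → H →L[ℂ] H) (hNf : ∀ α, Nf α ∈ 𝒩.carrier) (x : A → H) :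
    IsLeftIdealOf 𝒩 (constructedIdeal 𝒩 Nf x) ∧
    (constructedIdeal 𝒩 Nf x = (nestAlgebra 𝒩 : Set (H →L[ℂ] H)) ↔
      Filter.Tendsto (fun α => (1 - Nf α) (x α)) Filter.atTop (nhds 0)) :=
  statement4_general 𝒩 Nf hNf x
end
end

section
/- An arbitrary intersection of strongly constructible left ideals of a nest algebra is strongly constructible. -/
noncomputable section

universe u

variable {H : Type u} [NormedAddCommGroup H] [InnerProductSpace ℂ H] [CompleteSpace H]
  [TopologicalSpace.SeparableSpace H]

/-- an arbitrary (nonempty) intersection of strongly constructible left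
ideals of a nest algebra is strongly constructible. -/
theorem statement9 (𝒩 : Nest H) (K : Type u) [Nonempty K] (L : K → Set (H →L[ℂ] H))
    (hL : ∀ k, IsStronglyConstructible 𝒩 (L k)) :
    IsStronglyConstructible 𝒩 (⋂ k, L k) := by
  classical
  choose A pA dA nA Nf xf hmem hnorm hfix hEq using hL
  letI : ∀ k, Preorder (A k) := pA
  haveI : ∀ k, IsDirected (A k) (· ≤ ·) := dA
  haveI : ∀ k, Nonempty (A k) := nA
  letI instB : Preorder ((∀ k, A k) × K) := Preorder.lift Prod.fst
  haveI hdir : IsDirected ((∀ k, A k) × K) (· ≤ ·) := by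
    constructor
    intro ⟨f, k⟩ ⟨g, l⟩
    have h : ∀ j, ∃ c : A j, f j ≤ c ∧ g j ≤ c := fun j => directed_of (· ≤ ·) (f j) (g j)
    choose c hc1 hc2 using h
    exact ⟨⟨c, k⟩, fun j => hc1 j, fun j => hc2 j⟩
  refine ⟨(∀ k, A k) × K, instB, hdir, inferInstance,
    fun β => Nf β.2 (β.1 β.2), fun β => xf β.2 (β.1 β.2),
    fun β => hmem β.2 (β.1 β.2), fun β => hnorm β.2 (β.1 β.2),
    fun β => hfix β.2 (β.1 β.2), ?_⟩
  ext X
  simp only [Set.mem_iInter, constructedIdeal, Set.mem_setOf_eq]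
  have htend : ∀ u : ((∀ k, A k) × K) → ℝ, (∀ β, 0 ≤ u β) →
      (Filter.Tendsto u Filter.atTop (nhds 0) ↔
        ∀ ε > 0, ∃ β₀, ∀ β ≥ β₀, u β < ε) := by
    intro u hu
    rw [Metric.tendsto_nhds]
    constructor
    · intro h ε hε
      rcases (Filter.eventually_atTop).1 (h ε hε) with ⟨β₀, hβ₀⟩
      exact ⟨β₀, fun β hβ => by
        have := hβ₀ β hβ; rwa [Real.dist_eq, sub_zero, abs_of_nonneg (hu β)] at this⟩
    · intro h ε hε
      rcases h ε hε with ⟨β₀, hβ₀⟩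
      exact (Filter.eventually_atTop).2 ⟨β₀, fun β hβ => by
        rw [Real.dist_eq, sub_zero, abs_of_nonneg (hu β)]; exact hβ₀ β hβ⟩
  have htendk : ∀ (k : K) (u : A k → ℝ), (∀ α, 0 ≤ u α) →
      (Filter.Tendsto u Filter.atTop (nhds 0) ↔
        ∀ ε > 0, ∃ α₀, ∀ α ≥ α₀, u α < ε) := by
    intro k u hu
    rw [Metric.tendsto_nhds]
    constructor
    · intro h ε hε
      rcases (Filter.eventually_atTop).1 (h ε hε) with ⟨α₀, hα₀⟩
      exact ⟨α₀, fun α hα => by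
        have := hα₀ α hα; rwa [Real.dist_eq, sub_zero, abs_of_nonneg (hu α)] at this⟩
    · intro h ε hε
      rcases h ε hε with ⟨α₀, hα₀⟩
      exact (Filter.eventually_atTop).2 ⟨α₀, fun α hα => by
        rw [Real.dist_eq, sub_zero, abs_of_nonneg (hu α)]; exact hα₀ α hα⟩
  constructor
  · intro h
    have halg : X ∈ nestAlgebra 𝒩 := by
      obtain ⟨k⟩ := (inferInstance : Nonempty K)
      have := h k
      rw [hEq k] at this
      exact this.1
    refine ⟨halg, ?_⟩
    rw [htend _ (fun β => norm_nonneg _)]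
    intro ε hε
    have hk : ∀ k, ∃ α₀ : A k, ∀ α ≥ α₀, ‖(1 - Nf k α) (X (xf k α))‖ < ε := by
      intro k
      have := h k
      rw [hEq k] at this
      exact ((htendk k _ (fun α => norm_nonneg _)).1 this.2) ε hε
    choose α₀ hα₀ using hk
    refine ⟨⟨α₀, Classical.arbitrary K⟩, ?_⟩
    rintro ⟨f, k⟩ hf
    exact hα₀ k (f k) (hf k)
  · rintro ⟨halg, htd⟩ k
    rw [hEq k]
    refine ⟨halg, ?_⟩
    rw [htendk k _ (fun α => norm_nonneg _)]
    intro ε hε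
    rw [htend _ (fun β => norm_nonneg _)] at htd
    rcases htd ε hε with ⟨⟨f₀, k₀⟩, hβ₀⟩
    refine ⟨f₀ k, fun α hα => ?_⟩
    have hle : (⟨f₀, k₀⟩ : (∀ k, A k) × K) ≤ ⟨Function.update f₀ k α, k⟩ := by
      intro j
      by_cases hj : j = k
      · subst hj; simp [Function.update_self]; exact hα
      · simp [Function.update_of_ne hj]
    have := hβ₀ ⟨Function.update f₀ k α, k⟩ hle
    simpa [Function.update_self] using this
end
end

section
/- Let L be a proper left ideal of a nest algebra T(N) which can be specified by a net (N_α, x_α)_{α∈A} with sup_α ‖x_α‖ < ∞. Then L is strongly constructible, i.e. can be specified by a net whose vectors are all unit vectors. -/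
noncomputable section

universe u

variable {H : Type u} [NormedAddCommGroup H] [InnerProductSpace ℂ H] [CompleteSpace H]
  [TopologicalSpace.SeparableSpace H]

/-!
For every `T ∈ T(𝒩)` outside `L`, the quantity `‖(I - N_α) T x_α‖` stays above some `ε > 0` on
a cofinal set of indices. There `y_α = (I - N_α) x_α` satisfies `ε ≤ ‖T‖ ‖y_α‖ ≤ ‖T‖ C`, so
normalizing `y_α` rescales `‖(I - N_α) X x_α‖` by a factor bounded above and below. The resulting
strongly constructible ideal contains `L` but not `T`; hence `L` is the intersection of these
ideals, and an intersection of strongly constructible ideals is strongly constructible (index by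
the product of the index sets together with a choice of factor).
-/

open Filter

structure DiagonalIndex {ι : Type u} (A : ι → Type u) : Type u where
  pt : ∀ i, A i
  sel : ι

namespace DiagonalIndex

variable {ι : Type u} {A : ι → Type u} [∀ i, Preorder (A i)]

instance : Preorder (DiagonalIndex A) := Preorder.lift pt

instance [∀ i, IsDirected (A i) (· ≤ ·)] : IsDirected (DiagonalIndex A) (· ≤ ·) where
  directed a b := by
    choose c hac hbc using fun i => directed_of (· ≤ ·) (a.pt i) (b.pt i)
    exact ⟨⟨c, a.sel⟩, hac, hbc⟩

instance [Nonempty ι] [∀ i, Nonempty (A i)] : Nonempty (DiagonalIndex A) :=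
  ⟨⟨fun _ => Classical.arbitrary _, Classical.arbitrary ι⟩⟩

theorem tendsto_atTop_iff [Nonempty ι] [∀ i, IsDirected (A i) (· ≤ ·)] [∀ i, Nonempty (A i)]
    {β : Type*} {f : ∀ i, A i → β} {l : Filter β} :
    Tendsto (fun b : DiagonalIndex A => f b.sel (b.pt b.sel)) atTop l ↔
      ∀ i, Tendsto (f i) atTop l := by
  classical
  simp only [tendsto_atTop']
  constructor
  · intro h i s hs
    obtain ⟨b₀, hb₀⟩ := h s hs
    refine ⟨b₀.pt i, fun α hα => ?_⟩
    have hle : b₀ ≤ ⟨Function.update b₀.pt i α, i⟩ :=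
      le_update_iff.2 ⟨hα, fun _ _ => le_rfl⟩
    simpa using hb₀ _ hle
  · intro h s hs
    choose a ha using fun i => h i s hs
    exact ⟨⟨a, Classical.arbitrary ι⟩, fun b hb => ha b.sel _ (hb b.sel)⟩

end DiagonalIndex

namespace Filter.Frequently

variable {A : Type*} [Preorder A] [IsDirected A (· ≤ ·)] [Nonempty A] {p : A → Prop}

theorem isDirected_subtype (h : ∃ᶠ a in atTop, p a) :
    IsDirected {a // p a} (· ≤ ·) where
  directed a b := by
    obtain ⟨c, hac, hbc⟩ := directed_of (· ≤ ·) a.1 b.1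
    obtain ⟨d, hcd, hd⟩ := frequently_atTop.1 h c
    exact ⟨⟨d, hd⟩, hac.trans hcd, hbc.trans hcd⟩

theorem tendsto_subtype_val (h : ∃ᶠ a in atTop, p a) :
    Tendsto (Subtype.val : {a // p a} → A) atTop atTop :=
  tendsto_atTop_atTop_of_monotone (fun _ _ hab => hab) fun b =>
    let ⟨d, hbd, hd⟩ := frequently_atTop.1 h b
    ⟨⟨d, hd⟩, hbd⟩

end Filter.Frequently

section Constructible

variable {E : Type u} [NormedAddCommGroup E] [InnerProductSpace ℂ E] [CompleteSpace E]
  {𝒩 : Nest E}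

theorem Nest.norm_one_sub_apply_le {P : E →L[ℂ] E} (hP : P ∈ 𝒩.carrier) (v : E) :
    ‖(1 - P) v‖ ≤ ‖v‖ := by
  have hproj : IsStarProjection P := ⟨(𝒩.isProj P hP).2, (𝒩.isProj P hP).1⟩
  calc ‖(1 - P) v‖ ≤ ‖1 - P‖ * ‖v‖ := (1 - P).le_opNorm v
    _ ≤ ‖v‖ := mul_le_of_le_one_left (norm_nonneg v) (hproj.one_sub.norm_le)

theorem one_sub_apply_apply_one_sub_apply {X P : E →L[ℂ] E} (hX : X ∈ nestAlgebra 𝒩)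
    (hP : P ∈ 𝒩.carrier) (v : E) : (1 - P) (X ((1 - P) v)) = (1 - P) (X v) := by
  have h : (1 - P) * X * (1 - P) = (1 - P) * X := by rw [mul_sub, mul_one, hX P hP, sub_zero]
  exact congr($h v)

theorem norm_one_sub_apply_apply_le {X P : E →L[ℂ] E} (hX : X ∈ nestAlgebra 𝒩)
    (hP : P ∈ 𝒩.carrier) (v : E) : ‖(1 - P) (X v)‖ ≤ ‖X‖ * ‖(1 - P) v‖ :=
  calc ‖(1 - P) (X v)‖ = ‖(1 - P) (X ((1 - P) v))‖ := by
        rw [one_sub_apply_apply_one_sub_apply hX hP]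
    _ ≤ ‖X ((1 - P) v)‖ := 𝒩.norm_one_sub_apply_le hP _
    _ ≤ ‖X‖ * ‖(1 - P) v‖ := X.le_opNorm _

theorem constructedIdeal_subset_nestAlgebra {A : Type u} [Preorder A] (Nf : A → E →L[ℂ] E)
    (x : A → E) : constructedIdeal 𝒩 Nf x ⊆ nestAlgebra 𝒩 :=
  fun _ hX => hX.1

theorem IsStronglyConstructible.subset_nestAlgebra {L : Set (E →L[ℂ] E)}
    (hL : IsStronglyConstructible 𝒩 L) : L ⊆ nestAlgebra 𝒩 := by
  obtain ⟨A, _, _, _, Nf, x, -, -, -, rfl⟩ := hL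
  exact constructedIdeal_subset_nestAlgebra Nf x

theorem constructedIdeal_subset_comp {A B : Type u} [Preorder A] [Preorder B] {φ : B → A}
    (hφ : Tendsto φ atTop atTop) (Nf : A → E →L[ℂ] E) (x : A → E) :
    constructedIdeal 𝒩 Nf x ⊆ constructedIdeal 𝒩 (Nf ∘ φ) (x ∘ φ) :=
  fun _ ⟨hX, hlim⟩ => ⟨hX, hlim.comp hφ⟩

theorem constructedIdeal_diagonal {ι : Type u} [Nonempty ι] {A : ι → Type u}
    [∀ i, Preorder (A i)] [∀ i, IsDirected (A i) (· ≤ ·)] [∀ i, Nonempty (A i)]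
    (Nf : ∀ i, A i → E →L[ℂ] E) (x : ∀ i, A i → E) :
    constructedIdeal 𝒩 (fun b : DiagonalIndex A => Nf b.sel (b.pt b.sel))
        (fun b => x b.sel (b.pt b.sel)) = ⋂ i, constructedIdeal 𝒩 (Nf i) (x i) := by
  ext X
  simp only [constructedIdeal, Set.mem_iInter, Set.mem_ofPred_eq, forall_and, forall_const,
    DiagonalIndex.tendsto_atTop_iff (f := fun i α => ‖(1 - Nf i α) (X (x i α))‖)]

theorem IsStronglyConstructible.iInter {ι : Type u} [Nonempty ι] {L : ι → Set (E →L[ℂ] E)}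
    (hL : ∀ i, IsStronglyConstructible 𝒩 (L i)) : IsStronglyConstructible 𝒩 (⋂ i, L i) := by
  choose A _ _ _ Nf x hNf hnorm hfix hL using hL
  refine ⟨DiagonalIndex A, inferInstance, inferInstance, inferInstance,
    fun b => Nf b.sel (b.pt b.sel), fun b => x b.sel (b.pt b.sel),
    fun b => hNf _ _, fun b => hnorm _ _, fun b => hfix _ _, ?_⟩
  rw [constructedIdeal_diagonal]
  exact Set.iInter_congr hL

def normalizedNet {A : Type u} (Nf : A → E →L[ℂ] E) (x : A → E) (α : A) : E :=
  ‖(1 - Nf α) (x α)‖⁻¹ • (1 - Nf α) (x α)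

theorem norm_one_sub_apply_normalizedNet {A : Type u} {Nf : A → E →L[ℂ] E} (x : A → E) {α : A}
    (hα : Nf α ∈ 𝒩.carrier) {X : E →L[ℂ] E} (hX : X ∈ nestAlgebra 𝒩) :
    ‖(1 - Nf α) (X (normalizedNet Nf x α))‖ =
      ‖(1 - Nf α) (x α)‖⁻¹ * ‖(1 - Nf α) (X (x α))‖ := by
  rw [normalizedNet, ContinuousLinearMap.map_smul_of_tower,
    ContinuousLinearMap.map_smul_of_tower, one_sub_apply_apply_one_sub_apply hX hα, norm_smul,
    norm_inv, norm_norm]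

theorem isStronglyConstructible_normalizedNet {A : Type u} [Preorder A] [IsDirected A (· ≤ ·)]
    [Nonempty A] {Nf : A → E →L[ℂ] E} (hNf : ∀ α, Nf α ∈ 𝒩.carrier) {x : A → E}
    (hx : ∀ α, (1 - Nf α) (x α) ≠ 0) :
    IsStronglyConstructible 𝒩 (constructedIdeal 𝒩 Nf (normalizedNet Nf x)) := by
  refine ⟨A, inferInstance, inferInstance, inferInstance, Nf, normalizedNet Nf x, hNf,
    fun α => ?_, fun α => ?_, rfl⟩
  · rw [normalizedNet, norm_smul, norm_inv, norm_norm, inv_mul_cancel₀ (norm_ne_zero_iff.2 (hx α))]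
  · have hidem : (1 - Nf α) * (1 - Nf α) = 1 - Nf α :=
      (IsIdempotentElem.one_sub (𝒩.isProj _ (hNf α)).2).eq
    rw [normalizedNet, ContinuousLinearMap.map_smul_of_tower, ← mul_apply_eq_comp, hidem]

section Separated

variable {A : Type u} {Nf : A → E →L[ℂ] E} {x : A → E} {T : E →L[ℂ] E} {ε : ℝ}

theorem one_sub_apply_ne_zero_of_le (hNf : ∀ α, Nf α ∈ 𝒩.carrier) (hT : T ∈ nestAlgebra 𝒩)
    (hε : 0 < ε) (hsep : ∀ α, ε ≤ ‖(1 - Nf α) (T (x α))‖) (α : A) : (1 - Nf α) (x α) ≠ 0 := by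
  intro h0
  have := norm_one_sub_apply_apply_le hT (hNf α) (x α)
  rw [h0, norm_zero, mul_zero] at this
  linarith [hsep α]

theorem constructedIdeal_subset_normalizedNet [Preorder A] (hNf : ∀ α, Nf α ∈ 𝒩.carrier)
    (hT : T ∈ nestAlgebra 𝒩) (hε : 0 < ε) (hsep : ∀ α, ε ≤ ‖(1 - Nf α) (T (x α))‖) :
    constructedIdeal 𝒩 Nf x ⊆ constructedIdeal 𝒩 Nf (normalizedNet Nf x) := by
  rintro X ⟨hX, hlim⟩
  refine ⟨hX, squeeze_zero (fun _ => norm_nonneg _) (fun α => ?_)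
    (by simpa using hlim.const_mul (‖T‖ / ε))⟩
  have hy : 0 < ‖(1 - Nf α) (x α)‖ :=
    norm_pos_iff.2 (one_sub_apply_ne_zero_of_le hNf hT hε hsep α)
  have hinv : ‖(1 - Nf α) (x α)‖⁻¹ ≤ ‖T‖ / ε := by
    rw [inv_eq_one_div, div_le_div_iff₀ hy hε, one_mul]
    exact (hsep α).trans (norm_one_sub_apply_apply_le hT (hNf α) (x α))
  rw [norm_one_sub_apply_normalizedNet x (hNf α) hX]
  exact mul_le_mul_of_nonneg_right hinv (norm_nonneg _)

theorem notMem_constructedIdeal_normalizedNet [Preorder A] [IsDirected A (· ≤ ·)] [Nonempty A]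
    (hNf : ∀ α, Nf α ∈ 𝒩.carrier) {C : ℝ} (hbdd : ∀ α, ‖x α‖ ≤ C) (hT : T ∈ nestAlgebra 𝒩)
    (hε : 0 < ε) (hsep : ∀ α, ε ≤ ‖(1 - Nf α) (T (x α))‖) :
    T ∉ constructedIdeal 𝒩 Nf (normalizedNet Nf x) := by
  have hy : ∀ α, 0 < ‖(1 - Nf α) (x α)‖ :=
    fun α => norm_pos_iff.2 (one_sub_apply_ne_zero_of_le hNf hT hε hsep α)
  have hyC : ∀ α, ‖(1 - Nf α) (x α)‖ ≤ C :=
    fun α => (𝒩.norm_one_sub_apply_le (hNf α) _).trans (hbdd α)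
  have hC : 0 < C := (hy (Classical.arbitrary A)).trans_le (hyC _)
  rintro ⟨-, hlim⟩
  have hlower : ∀ α, C⁻¹ * ε ≤ ‖(1 - Nf α) (T (normalizedNet Nf x α))‖ := fun α => by
    rw [norm_one_sub_apply_normalizedNet x (hNf α) hT]
    exact mul_le_mul (inv_anti₀ (hy α) (hyC α)) (hsep α) hε.le (inv_nonneg.2 (norm_nonneg _))
  have := ge_of_tendsto' hlim hlower
  have : 0 < C⁻¹ * ε := by positivity
  linarith

end Separated

theorem exists_isStronglyConstructible_superset_notMem {A : Type u} [Preorder A]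
    [IsDirected A (· ≤ ·)] [Nonempty A] {Nf : A → E →L[ℂ] E} (hNf : ∀ α, Nf α ∈ 𝒩.carrier)
    {x : A → E} {C : ℝ} (hbdd : ∀ α, ‖x α‖ ≤ C) {T : E →L[ℂ] E} (hT : T ∈ nestAlgebra 𝒩)
    (hTL : T ∉ constructedIdeal 𝒩 Nf x) :
    ∃ L', IsStronglyConstructible 𝒩 L' ∧ constructedIdeal 𝒩 Nf x ⊆ L' ∧ T ∉ L' := by
  obtain ⟨ε, hε, hfreq⟩ : ∃ ε > 0, ∃ᶠ α in atTop, ε ≤ ‖(1 - Nf α) (T (x α))‖ := by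
    have hlim : ¬ Tendsto (fun α => ‖(1 - Nf α) (T (x α))‖) atTop (nhds 0) :=
      fun hlim => hTL ⟨hT, hlim⟩
    rw [Metric.tendsto_nhds] at hlim
    push Not at hlim
    simpa only [dist_zero_right, norm_norm] using hlim
  let S := {α // ε ≤ ‖(1 - Nf α) (T (x α))‖}
  have : IsDirected S (· ≤ ·) := hfreq.isDirected_subtype
  have : Nonempty S := hfreq.exists.elim fun α hα => ⟨⟨α, hα⟩⟩
  have hsep : ∀ s : S, ε ≤ ‖(1 - Nf s) (T (x s))‖ := Subtype.prop
  have hNf' : ∀ s : S, Nf s ∈ 𝒩.carrier := fun s => hNf s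
  exact ⟨_, isStronglyConstructible_normalizedNet hNf'
      (one_sub_apply_ne_zero_of_le hNf' hT hε hsep),
    (constructedIdeal_subset_comp hfreq.tendsto_subtype_val Nf x).trans
      (constructedIdeal_subset_normalizedNet hNf' hT hε hsep),
    notMem_constructedIdeal_normalizedNet hNf' (fun s => hbdd s) hT hε hsep⟩

end Constructible

/-- a proper left ideal specified by a net whose vectors are uniformly
bounded in norm is strongly constructible. -/
theorem statement10 (𝒩 : Nest H) {A : Type u} [Preorder A] [IsDirected A (· ≤ ·)]
    [Nonempty A] (Nf : A → H →L[ℂ] H) (hNf : ∀ α, Nf α ∈ 𝒩.carrier) (x : A → H)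
    (C : ℝ) (hbdd : ∀ α, ‖x α‖ ≤ C)
    (hproper : constructedIdeal 𝒩 Nf x ≠ (nestAlgebra 𝒩 : Set (H →L[ℂ] H))) :
    IsStronglyConstructible 𝒩 (constructedIdeal 𝒩 Nf x) := by
  set L := constructedIdeal 𝒩 Nf x
  choose L' hL' hLL' hTL' using fun T : {T // T ∈ nestAlgebra 𝒩 ∧ T ∉ L} =>
    exists_isStronglyConstructible_superset_notMem hNf hbdd T.2.1 T.2.2
  obtain ⟨T₀, hT₀⟩ := Set.exists_of_ssubset
    (Set.ssubset_iff_subset_ne.2 ⟨constructedIdeal_subset_nestAlgebra Nf x, hproper⟩)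
  have : Nonempty {T // T ∈ nestAlgebra 𝒩 ∧ T ∉ L} := ⟨⟨T₀, hT₀⟩⟩
  have hL : L = ⋂ T, L' T := by
    refine subset_antisymm (Set.subset_iInter hLL') fun X hX => ?_
    have hXalg : X ∈ nestAlgebra 𝒩 := (hL' _).subset_nestAlgebra (Set.mem_iInter.1 hX ⟨T₀, hT₀⟩)
    by_contra hXL
    exact hTL' ⟨X, hXalg, hXL⟩ (Set.mem_iInter.1 hX _)
  rw [hL]
  exact .iInter hL'
end
end

section
/- Let X ∈ B(H) and let (P_n), (Q_n) be sequences of orthogonal projections such that dist(P_n X Q_n, F_{4n−4}) > 1 for all n, where F_k denotes the set of operators of rank at most k. Then there exist orthonormal sequences (x_i) with x_i ∈ P_i H and (y_i) with y_i ∈ Q_i H such that ⟨x_i, X y_j⟩ = 0 for all i ≠ j and ⟨x_i, X y_i⟩ is real and greater than 1 for all i. -/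
/-!
The pairs `(x_n, y_n)` are chosen one at a time. At stage `n`, let `K ⊆ P_n H` be spanned by the
`P_n x_i`, `P_n X y_i` and `L ⊆ Q_n H` by the `Q_n y_i`, `Q_n X* x_i` (`i < n`), so that
`dim K, dim L ≤ 2n`. With `p_K`, `p_L` the orthogonal projections, the compression
`T = (1 - p_K) (P_n X Q_n) (1 - p_L)` differs from `P_n X Q_n` by an operator of rank at most
`4n`, hence `‖T‖ > 1`. Take `‖u‖ < 1` with `‖T u‖ > 1` and put `b = Q_n (1 - p_L) u`, `a = T u = (1 - p_K) P_n X b`. Then `a ∈ P_n H ∩ Kᗮ`,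
`b ∈ Q_n H ∩ Lᗮ`, `⟪a, X b⟫ = ‖a‖²` and `‖b‖ < ‖a‖`, so the normalised vectors satisfy all the
orthogonality relations with the earlier pairs and `⟪x_n, X y_n⟫ = ‖a‖ / ‖b‖ > 1`.
-/

noncomputable section

universe u

variable {H : Type u} [NormedAddCommGroup H] [InnerProductSpace ℂ H] [CompleteSpace H]
  [TopologicalSpace.SeparableSpace H]

/-- The set `F_k` of bounded operators of rank at most `k`. -/
def finRankLE (H : Type u) [NormedAddCommGroup H] [InnerProductSpace ℂ H] (k : ℕ) :
    Set (H →L[ℂ] H) := {T | LinearMap.rank (T : H →ₗ[ℂ] H) ≤ (k : Cardinal)}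

open scoped InnerProductSpace

theorem exists_seq_of_forall_fin_exists {α : Type*} {p : ∀ n, (Fin n → α) → α → Prop}
    (h : ∀ n s, ∃ a, p n s a) : ∃ f : ℕ → α, ∀ n, p n (fun i => f i) (f n) := by
  choose g hg using h
  let f : ℕ → α := Nat.strongRec fun n prev => g n fun i => prev i i.2
  refine ⟨f, fun n => ?_⟩
  rw [show f n = g n (fun i => f i) from Nat.strongRec_eq _ n]
  exact hg _ _

section InnerProductSpace

variable {𝕜 E : Type*} [RCLike 𝕜] [NormedAddCommGroup E] [InnerProductSpace 𝕜 E]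

theorem orthonormal_of_forall_lt {v : ℕ → E} (hnorm : ∀ i, ‖v i‖ = 1)
    (horth : ∀ i j, i < j → ⟪v i, v j⟫_𝕜 = 0) : Orthonormal 𝕜 v := by
  refine ⟨hnorm, fun i j hij => ?_⟩
  rcases hij.lt_or_gt with h | h
  · exact horth i j h
  · exact inner_eq_zero_symm.1 (horth j i h)

theorem IsIdempotentElem.apply_apply {p : E →L[𝕜] E} (hp : IsIdempotentElem p) (v : E) :
    p (p v) = p v :=
  DFunLike.congr_fun hp v

theorem IsStarProjection.norm_apply_le [CompleteSpace E] {p : E →L[𝕜] E}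
    (hp : IsStarProjection p) (v : E) : ‖p v‖ ≤ ‖v‖ :=
  (p.le_of_opNorm_le (IsStarProjection.norm_le p hp) v).trans_eq (one_mul _)

theorem inner_eq_zero_of_apply_mem [CompleteSpace E] {P : E →L[𝕜] E} (hP : IsSelfAdjoint P)
    {K : Submodule 𝕜 E} {v a : E} (hv : P v ∈ K) (hPa : P a = a) (ha : a ∈ Kᗮ) :
    ⟪v, a⟫_𝕜 = 0 := by
  rw [← hPa, ← ContinuousLinearMap.adjoint_inner_left, hP.adjoint_eq]
  exact Submodule.inner_right_of_mem_orthogonal hv ha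

theorem rank_starProjection_span_range_le {ι : Type*} [Fintype ι] (v : ι → E)
    [(Submodule.span 𝕜 (Set.range v)).HasOrthogonalProjection] :
    ((Submodule.span 𝕜 (Set.range v)).starProjection : E →ₗ[𝕜] E).rank ≤ Fintype.card ι := by
  rw [LinearMap.rank, Submodule.range_starProjection]
  refine (rank_span_le _).trans ?_
  simpa using Cardinal.mk_range_le_lift (f := v)

theorem exists_smul_unit_pair_of_inner_eq_norm_sq {X : E →L[𝕜] E} {a b : E}
    (hab : ⟪a, X b⟫_𝕜 = ((‖a‖ ^ 2 : ℝ) : 𝕜)) (hlt : ‖b‖ < ‖a‖) :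
    ∃ c d : 𝕜, ‖c • a‖ = 1 ∧ ‖d • b‖ = 1 ∧ ∃ r : ℝ, 1 < r ∧ ⟪c • a, X (d • b)⟫_𝕜 = r := by
  have ha : a ≠ 0 := norm_pos_iff.1 ((norm_nonneg b).trans_lt hlt)
  have hb : b ≠ 0 := by
    rintro rfl
    simp only [map_zero, inner_zero_right] at hab
    exact ha (by simpa [eq_comm (a := (0 : 𝕜))] using hab)
  refine ⟨(‖a‖⁻¹ : 𝕜), (‖b‖⁻¹ : 𝕜), norm_smul_inv_norm ha, norm_smul_inv_norm hb,
    ‖a‖ / ‖b‖, (one_lt_div (norm_pos_iff.2 hb)).2 hlt, ?_⟩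
  rw [map_smul, inner_smul_left, inner_smul_right, hab]
  have : ‖a‖ ≠ 0 := norm_ne_zero_iff.2 ha
  simp only [map_inv₀, RCLike.conj_ofReal]
  push_cast
  field_simp

theorem exists_unit_pair_of_one_lt_norm_compression [CompleteSpace E] {X P Q : E →L[𝕜] E}
    (hP : IsStarProjection P) (hQ : IsStarProjection Q) {K L : Submodule 𝕜 E}
    [K.HasOrthogonalProjection] [L.HasOrthogonalProjection]
    (hK : ∀ v ∈ K, P v = v) (hL : ∀ v ∈ L, Q v = v)
    (h : 1 < ‖(1 - K.starProjection) * (P * X * Q) * (1 - L.starProjection)‖) :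
    ∃ a b : E, ‖a‖ = 1 ∧ ‖b‖ = 1 ∧ P a = a ∧ Q b = b ∧ a ∈ Kᗮ ∧ b ∈ Lᗮ ∧
      ∃ r : ℝ, 1 < r ∧ ⟪a, X b⟫_𝕜 = r := by
  obtain ⟨u, hu, hTu⟩ := ContinuousLinearMap.exists_lt_apply_of_lt_opNorm _ h
  set w := u - L.starProjection u
  set b := Q w
  set z := P (X b)
  set a := z - K.starProjection z
  have hPa : P a = a := by
    rw [map_sub, hP.isIdempotentElem.apply_apply, hK _ (K.starProjection_apply_mem _)]
  have hQb : Q b = b := hQ.isIdempotentElem.apply_apply w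
  have haK : a ∈ Kᗮ := K.sub_starProjection_mem_orthogonal z
  have hbL : b ∈ Lᗮ := by
    refine (Submodule.mem_orthogonal L b).2 fun v hv => ?_
    calc ⟪v, Q w⟫_𝕜 = ⟪Q v, w⟫_𝕜 := (hQ.isSelfAdjoint.isSymmetric v w).symm
      _ = 0 := by
        rw [hL v hv]
        exact Submodule.inner_right_of_mem_orthogonal hv (L.sub_starProjection_mem_orthogonal u)
  have hba : ‖b‖ < ‖a‖ := calc
    ‖b‖ ≤ ‖w‖ := hQ.norm_apply_le w
    _ ≤ ‖u‖ := by simpa using isStarProjection_starProjection.one_sub.norm_apply_le u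
    _ < 1 := hu
    _ < ‖a‖ := hTu
  have hab : ⟪a, X b⟫_𝕜 = ((‖a‖ ^ 2 : ℝ) : 𝕜) := calc
    ⟪a, X b⟫_𝕜 = ⟪P a, X b⟫_𝕜 := by rw [hPa]
    _ = ⟪a, z⟫_𝕜 := hP.isSelfAdjoint.isSymmetric a (X b)
    _ = ⟪a, a + K.starProjection z⟫_𝕜 := by rw [sub_add_cancel]
    _ = ((‖a‖ ^ 2 : ℝ) : 𝕜) := by
      rw [inner_add_right,
        Submodule.inner_left_of_mem_orthogonal (K.starProjection_apply_mem z) haK, add_zero,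
        inner_self_eq_norm_sq_to_K]
      push_cast; rfl
  obtain ⟨c, d, hc, hd, hcd⟩ := exists_smul_unit_pair_of_inner_eq_norm_sq hab hba
  exact ⟨c • a, d • b, hc, hd, by rw [map_smul, hPa], by rw [map_smul, hQb],
    Kᗮ.smul_mem c haK, Lᗮ.smul_mem d hbL, hcd⟩

/-- `(a, b)` can be appended as the `n`-th pair to the pairs `(x i, y i)`, `i < n`. -/
structure IsInterpolatingExtension (X P Q : E →L[𝕜] E) {n : ℕ} (x y : Fin n → E) (a b : E) :
    Prop where
  norm_left : ‖a‖ = 1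
  norm_right : ‖b‖ = 1
  apply_left : P a = a
  apply_right : Q b = b
  inner_left : ∀ i, ⟪x i, a⟫_𝕜 = 0
  inner_right : ∀ i, ⟪y i, b⟫_𝕜 = 0
  inner_apply_right : ∀ i, ⟪x i, X b⟫_𝕜 = 0
  inner_left_apply : ∀ i, ⟪a, X (y i)⟫_𝕜 = 0
  exists_inner_apply_eq_real : ∃ r : ℝ, 1 < r ∧ ⟪a, X b⟫_𝕜 = r

end InnerProductSpace

section Complex

variable {V : Type*} [NormedAddCommGroup V] [InnerProductSpace ℂ V]

theorem infDist_finRankLE_add_le_norm {B e f : V →L[ℂ] V} {k m : ℕ}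
    (he : (e : V →ₗ[ℂ] V).rank ≤ k) (hf : (f : V →ₗ[ℂ] V).rank ≤ m) :
    Metric.infDist B (finRankLE V (k + m)) ≤ ‖(1 - e) * B * (1 - f)‖ := by
  have hmem : B - (1 - e) * B * (1 - f) ∈ finRankLE V (k + m) := by
    rw [show B - (1 - e) * B * (1 - f) = e * B + (1 - e) * B * f by noncomm_ring]
    have hrank : ((e * B + (1 - e) * B * f : V →L[ℂ] V) : V →ₗ[ℂ] V).rank ≤
        (e : V →ₗ[ℂ] V).rank + (f : V →ₗ[ℂ] V).rank :=
      (LinearMap.rank_add_le _ _).trans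
        (add_le_add (LinearMap.rank_comp_le_left _ _) (LinearMap.rank_comp_le_right _ _))
    refine hrank.trans ?_
    rw [Nat.cast_add]
    exact add_le_add he hf
  calc Metric.infDist B (finRankLE V (k + m)) ≤ dist B (B - (1 - e) * B * (1 - f)) :=
        Metric.infDist_le_dist_of_mem hmem
    _ = ‖(1 - e) * B * (1 - f)‖ := by rw [dist_eq_norm, sub_sub_cancel]

theorem exists_isInterpolatingExtension [CompleteSpace V] {X P Q : V →L[ℂ] V}
    (hP : IsStarProjection P) (hQ : IsStarProjection Q) {n : ℕ}
    (hdist : 1 < Metric.infDist (P * X * Q) (finRankLE V (4 * n))) (x y : Fin n → V) :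
    ∃ a b, IsInterpolatingExtension X P Q x y a b := by
  set gK : Fin n ⊕ Fin n → V := Sum.elim (fun i => P (x i)) fun i => P (X (y i))
  set gL : Fin n ⊕ Fin n → V :=
    Sum.elim (fun i => Q (y i)) fun i => Q (ContinuousLinearMap.adjoint X (x i))
  set K := Submodule.span ℂ (Set.range gK)
  set L := Submodule.span ℂ (Set.range gL)
  have : FiniteDimensional ℂ K := FiniteDimensional.span_of_finite ℂ (Set.finite_range gK)
  have : FiniteDimensional ℂ L := FiniteDimensional.span_of_finite ℂ (Set.finite_range gL)
  have memK (j) : gK j ∈ K := Submodule.subset_span (Set.mem_range_self j)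
  have memL (j) : gL j ∈ L := Submodule.subset_span (Set.mem_range_self j)
  have hK : ∀ v ∈ K, P v = v := LinearMap.eqOn_span (f := (P : V →ₗ[ℂ] V)) (g := LinearMap.id) <| by
    rintro _ ⟨i | i, rfl⟩ <;> exact hP.isIdempotentElem.apply_apply _
  have hL : ∀ v ∈ L, Q v = v := LinearMap.eqOn_span (f := (Q : V →ₗ[ℂ] V)) (g := LinearMap.id) <| by
    rintro _ ⟨i | i, rfl⟩ <;> exact hQ.isIdempotentElem.apply_apply _
  have hT : 1 < ‖(1 - K.starProjection) * (P * X * Q) * (1 - L.starProjection)‖ := by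
    refine hdist.trans_le ?_
    rw [show 4 * n = Fintype.card (Fin n ⊕ Fin n) + Fintype.card (Fin n ⊕ Fin n) by simp; ring]
    exact infDist_finRankLE_add_le_norm (rank_starProjection_span_range_le gK)
      (rank_starProjection_span_range_le gL)
  obtain ⟨a, b, ha, hb, hPa, hQb, haK, hbL, hab⟩ :=
    exists_unit_pair_of_one_lt_norm_compression hP hQ hK hL hT
  refine ⟨a, b, ha, hb, hPa, hQb, fun i => ?_, fun i => ?_, fun i => ?_, fun i => ?_, hab⟩
  · exact inner_eq_zero_of_apply_mem hP.isSelfAdjoint (memK (.inl i)) hPa haK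
  · exact inner_eq_zero_of_apply_mem hQ.isSelfAdjoint (memL (.inl i)) hQb hbL
  · rw [← ContinuousLinearMap.adjoint_inner_left]
    exact inner_eq_zero_of_apply_mem hQ.isSelfAdjoint (memL (.inr i)) hQb hbL
  · exact inner_eq_zero_symm.1 <|
      inner_eq_zero_of_apply_mem hP.isSelfAdjoint (memK (.inr i)) hPa haK

end Complex

/-- The sequences are indexed from `0`, so the paper's rank bound `4(n+1) - 4` at the `(n+1)`-st
term reads `4 * n` here. -/
theorem statement12 (X : H →L[ℂ] H) (P Q : ℕ → H →L[ℂ] H)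
    (hP : ∀ n, IsSelfAdjoint (P n) ∧ P n * P n = P n)
    (hQ : ∀ n, IsSelfAdjoint (Q n) ∧ Q n * Q n = Q n)
    (hdist : ∀ n : ℕ, 1 < Metric.infDist (P n * X * Q n) (finRankLE H (4 * n))) :
    ∃ x y : ℕ → H, Orthonormal ℂ x ∧ Orthonormal ℂ y ∧
      (∀ i, P i (x i) = x i) ∧ (∀ i, Q i (y i) = y i) ∧
      (∀ i j, i ≠ j → (inner ℂ (x i) (X (y j)) : ℂ) = 0) ∧
      (∀ i, (inner ℂ (x i) (X (y i)) : ℂ).im = 0 ∧ 1 < (inner ℂ (x i) (X (y i)) : ℂ).re) := by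
  obtain ⟨s, hs⟩ := exists_seq_of_forall_fin_exists (p := fun n s ab =>
      IsInterpolatingExtension X (P n) (Q n) (fun i => (s i).1) (fun i => (s i).2) ab.1 ab.2)
    fun n s => (exists_isInterpolatingExtension ⟨(hP n).2, (hP n).1⟩ ⟨(hQ n).2, (hQ n).1⟩ (hdist n)
        (fun i => (s i).1) (fun i => (s i).2)).elim fun a ⟨b, h⟩ => ⟨(a, b), h⟩
  refine ⟨fun n => (s n).1, fun n => (s n).2,
    orthonormal_of_forall_lt (fun n => (hs n).norm_left) fun i j h => (hs j).inner_left ⟨i, h⟩,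
    orthonormal_of_forall_lt (fun n => (hs n).norm_right) fun i j h => (hs j).inner_right ⟨i, h⟩,
    fun n => (hs n).apply_left, fun n => (hs n).apply_right, fun i j hij => ?_, fun n => ?_⟩
  · rcases hij.lt_or_gt with h | h
    · exact (hs j).inner_apply_right ⟨i, h⟩
    · exact (hs i).inner_left_apply ⟨j, h⟩
  · obtain ⟨r, hr, hrs⟩ := (hs n).exists_inner_apply_eq_real
    rw [hrs]
    exact ⟨Complex.ofReal_im r, hr⟩
end
end

section
/- Suppose X ∈ T(N) and X ∉ I⁻_{N₀} for some N₀ ∈ N with N₀ = N₀⁻ > 0. Then there exist A, B ∈ T(N) and a sequence (N_k) in N strictly increasing to N₀ (with N₀ᵗʰ term N_0 = 0 or some base projection) such that AXB = Σ_{k=1}^∞ (N_k − N_{k−1}) AXB (N_k − N_{k−1}) and each term (N_k − N_{k−1}) AXB (N_k − N_{k−1}) has norm greater than 1. -/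
/-!
After rescaling `X`, every tail compression `(N₀ - Mₙ) X (N₀ - Mₙ)` has norm at least `2`. A
finite-rank perturbation of a tail changes little far out, so for `q` large the window `Mq - Mp`
contains a unit vector `v`, orthogonal to any prescribed finite set, with `‖(Mq - Mp) X v‖ > 1`.
Choose disjoint blocks of windows one after another, each carrying unit vectors `x, v, w, y`
placed upwards, with `|⟪w, X v⟫| > 1` and `v ⊥ X* w'` for the `w'` of all earlier blocks. Then
`A = ∑ ⟪wₖ, ·⟫ xₖ` and `B = ∑ ⟪yₖ, ·⟫ vₖ` lie in `T(𝒩)`, and since `X` is upper triangular the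
cross terms `⟪wⱼ, X vₖ⟫`, `j > k`, vanish as well. Hence `A X B = ∑ ⟪wₖ, X vₖ⟫ ⟪yₖ, ·⟫ xₖ` is
block diagonal, with blocks of norm `|⟪wₖ, X vₖ⟫| > 1`.
-/

open Filter Topology
open scoped InnerProductSpace

theorem ContinuousLinearMap.tendsto_of_tendsto_apply {𝕜 E F α : Type*} [NontriviallyNormedField 𝕜]
    [CompleteSpace 𝕜] [NormedAddCommGroup E] [NormedSpace 𝕜 E] [FiniteDimensional 𝕜 E]
    [NormedAddCommGroup F] [NormedSpace 𝕜 F] {l : Filter α} {f : α → E →L[𝕜] F}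
    {g : E →L[𝕜] F} (h : ∀ y, Tendsto (fun a => f a y) l (𝓝 (g y))) : Tendsto f l (𝓝 g) := by
  let e : (E →L[𝕜] F) ≃L[𝕜] Fin (Module.finrank 𝕜 E) → F :=
    ((ContinuousLinearEquiv.ofFinrankEq (Module.finrank_fin_fun 𝕜).symm).arrowCongr
      (1 : F ≃L[𝕜] F)).trans (ContinuousLinearEquiv.piRing _)
  rw [e.toHomeomorph.isInducing.tendsto_nhds_iff]
  exact tendsto_pi_nhds.mpr fun i => h _

theorem exists_apply_compression_eq {𝕜 E : Type*} [NontriviallyNormedField 𝕜]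
    [NormedAddCommGroup E] [NormedSpace 𝕜 E] [CompleteSpace E] {P D : E →L[𝕜] E}
    (hP : IsIdempotentElem P) (hsmall : ‖P - P * D * P‖ ≤ 1 / 2) (z : E) :
    ∃ c, P c = c ∧ P (D c) = P z ∧ ‖c‖ ≤ 2 * ‖P z‖ := by
  set t := P - P * D * P
  have ht : ‖t‖ < 1 := by linarith
  set c := (↑(Units.oneSub t ht)⁻¹ : E →L[𝕜] E) (P z)
  have hc : c = P z + t c := by
    have := congr($((Units.oneSub t ht).mul_inv) (P z))
    rw [Units.val_oneSub, mul_apply_eq_comp, sub_apply] at this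
    exact sub_eq_iff_eq_add.mp (by simpa using this)
  have hPt : P * t = t := by
    simp only [t, mul_sub, ← mul_assoc, hP.eq]
  have hPc : P c = c := by
    rw [hc, map_add, ← mul_apply_eq_comp P t, hPt, ← mul_apply_eq_comp P P, hP.eq]
  refine ⟨c, hPc, ?_, ?_⟩
  · have : P (D c) = c - t c := by
      simp only [t, sub_apply, mul_apply_eq_comp, hPc]
      abel
    rw [this]
    exact sub_eq_of_eq_add hc
  · have : ‖c‖ ≤ ‖P z‖ + ‖t‖ * ‖c‖ := by
      conv_lhs => rw [hc]
      exact (norm_add_le _ _).trans (add_le_add_right (t.le_opNorm c) _)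
    nlinarith [norm_nonneg c, norm_nonneg t]

section Projections

variable {H : Type*} [NormedAddCommGroup H] [InnerProductSpace ℂ H] {P Q R : H →L[ℂ] H} {z : H}

theorem projLE.trans (hPQ : projLE P Q) (hQR : projLE Q R) : projLE P R := by
  unfold projLE at *
  rw [← hPQ, ← mul_assoc, hQR]

theorem projLE.apply_eq_self (h : projLE P Q) (hz : P z = z) : Q z = z := by
  rw [← hz, ← mul_apply_eq_comp, h]

theorem projLE_of_le_of_forall_succ {M : ℕ → H →L[ℂ] H} (hM : ∀ n, IsIdempotentElem (M n))
    (hsucc : ∀ n, projLE (M n) (M (n + 1))) {i j : ℕ} (hij : i ≤ j) : projLE (M i) (M j) := by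
  induction j, hij using Nat.le_induction with
  | base => exact hM i
  | succ j _ ih => exact ih.trans (hsucc j)

def InWindow (P Q : H →L[ℂ] H) (z : H) : Prop := Q z = z ∧ P z = 0

variable [CompleteSpace H]

theorem Nest.isStarProjection {𝒩 : Nest H} (hP : P ∈ 𝒩.carrier) : IsStarProjection P :=
  ⟨(𝒩.isProj P hP).2, (𝒩.isProj P hP).1⟩

theorem projLE.mul_eq_left (hP : IsSelfAdjoint P) (hQ : IsSelfAdjoint Q) (h : projLE P Q) :
    P * Q = P := by
  simpa [hP.star_eq, hQ.star_eq] using congr(star $h)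

theorem projLE.apply_eq_zero (hP : IsSelfAdjoint P) (hQ : IsSelfAdjoint Q) (h : projLE P Q)
    (hz : Q z = 0) : P z = 0 := by
  rw [← h.mul_eq_left hP hQ, mul_apply_eq_comp, hz, map_zero]

theorem inner_eq_zero_of_apply_eq_self_of_apply_eq_zero {x y : H} (hP : IsSelfAdjoint P)
    (hx : P x = x) (hy : P y = 0) : ⟪x, y⟫_ℂ = 0 := by
  rw [← hx, ← ContinuousLinearMap.adjoint_inner_right, hP.adjoint_eq, hy, inner_zero_right]

theorem InWindow.mono {P' Q' : H →L[ℂ] H} (hz : InWindow P Q z) (hP : IsSelfAdjoint P)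
    (hP' : IsSelfAdjoint P') (hP'P : projLE P' P) (hQQ' : projLE Q Q') : InWindow P' Q' z :=
  ⟨hQQ'.apply_eq_self hz.1, hP'P.apply_eq_zero hP' hP hz.2⟩

theorem inWindow_iff_sub_apply (hP : IsStarProjection P) (hQ : IsStarProjection Q)
    (h : projLE P Q) : InWindow P Q z ↔ (Q - P) z = z := by
  refine ⟨fun hz => by simp [hz.1, hz.2], fun hz => ⟨?_, ?_⟩⟩
  · rw [← hz, ← mul_apply_eq_comp, mul_sub, hQ.isIdempotentElem.eq, h]
  · rw [← hz, ← mul_apply_eq_comp, mul_sub, h.mul_eq_left hP.isSelfAdjoint hQ.isSelfAdjoint,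
      hP.isIdempotentElem.eq, sub_self, zero_apply]

theorem InWindow.inner_eq_zero {P' Q' : H →L[ℂ] H} {z' : H} (hz : InWindow P Q z)
    (hz' : InWindow P' Q' z') (hQ : IsSelfAdjoint Q) (hP' : IsSelfAdjoint P') (h : projLE Q P') :
    ⟪z, z'⟫_ℂ = 0 :=
  inner_eq_zero_of_apply_eq_self_of_apply_eq_zero hQ hz.1 (h.apply_eq_zero hQ hP' hz'.2)

theorem orthonormal_of_inWindow {M : ℕ → H →L[ℂ] H} (hM : ∀ n, IsSelfAdjoint (M n))
    (hmono : ∀ {i j}, i ≤ j → projLE (M i) (M j)) {n : ℕ → ℕ} (hn : StrictMono n) {z : ℕ → H}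
    (hz : ∀ k, InWindow (M (n k)) (M (n (k + 1))) (z k)) (hz₁ : ∀ k, ‖z k‖ = 1) :
    Orthonormal ℂ z := by
  have key : ∀ j k, j < k → ⟪z j, z k⟫_ℂ = 0 := fun j k hjk =>
    (hz j).inner_eq_zero (hz k) (hM _) (hM _) (hmono (hn.monotone hjk))
  refine ⟨hz₁, fun j k hjk => hjk.lt_or_gt.elim (key j k) fun hkj => ?_⟩
  exact inner_eq_zero_symm.mp (key k j hkj)

end Projections

section Operators

variable {H : Type*} [NormedAddCommGroup H] [InnerProductSpace ℂ H]

theorem hasSum_inner_smul_mul {A B X : H →L[ℂ] H} {w x v y : ℕ → H}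
    (hA : ∀ h, HasSum (fun k => ⟪w k, h⟫_ℂ • x k) (A h))
    (hB : ∀ h, HasSum (fun k => ⟪y k, h⟫_ℂ • v k) (B h))
    (hcross : ∀ j k, j ≠ k → ⟪w j, X (v k)⟫_ℂ = 0) (h : H) :
    HasSum (fun k => (⟪w k, X (v k)⟫_ℂ * ⟪y k, h⟫_ℂ) • x k) ((A * X * B) h) := by
  have hcoeff : ∀ j, ⟪w j, X (B h)⟫_ℂ = ⟪w j, X (v j)⟫_ℂ * ⟪y j, h⟫_ℂ := fun j => by
    refine ((hB h).mapL ((innerSL ℂ (w j)).comp X)).unique ?_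
    simpa [mul_comm] using hasSum_single j fun k hk => by simp [hcross j k (Ne.symm hk)]
  simpa [mul_apply_eq_comp, hcoeff] using hA (X (B h))

variable [CompleteSpace H] {𝒩 : Nest H} {P X : H →L[ℂ] H}

theorem apply_apply_eq_self_of_mem_nestAlgebra (hX : X ∈ nestAlgebra 𝒩) (hP : P ∈ 𝒩.carrier)
    {v : H} (hv : P v = v) : P (X v) = X v := by
  have h := congr($(hX P hP) v)
  simp only [mul_apply_eq_comp, hv, sub_apply, one_apply_eq_self,
    zero_apply, sub_eq_zero] at h
  exact h.symm

theorem inner_apply_eq_zero_of_mem_nestAlgebra (hX : X ∈ nestAlgebra 𝒩) (hP : P ∈ 𝒩.carrier)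
    {v w : H} (hv : P v = v) (hw : P w = 0) : ⟪w, X v⟫_ℂ = 0 := by
  rw [inner_eq_zero_symm]
  exact inner_eq_zero_of_apply_eq_self_of_apply_eq_zero (Nest.isStarProjection hP).isSelfAdjoint
    (apply_apply_eq_self_of_mem_nestAlgebra hX hP hv) hw

theorem mem_nestAlgebra_of_hasSum {w x : ℕ → H} {T : H →L[ℂ] H}
    (hT : ∀ h, HasSum (fun k => ⟪w k, h⟫_ℂ • x k) (T h))
    (hcut : ∀ k, ∃ P ∈ 𝒩.carrier, P (x k) = x k ∧ P (w k) = 0) : T ∈ nestAlgebra 𝒩 := by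
  intro P hP
  ext h
  have hterm : ∀ k, (1 - P) (⟪w k, P h⟫_ℂ • x k) = 0 := fun k => by
    obtain ⟨P', hP', hx, hw⟩ := hcut k
    rcases 𝒩.chain P hP P' hP' with hPP' | hP'P
    · have hPw : P (w k) = 0 :=
        projLE.apply_eq_zero (Nest.isStarProjection hP).isSelfAdjoint
          (Nest.isStarProjection hP').isSelfAdjoint hPP' hw
      rw [← ContinuousLinearMap.adjoint_inner_left,
        (Nest.isStarProjection hP).isSelfAdjoint.adjoint_eq, hPw]
      simp
    · have hPx : P (x k) = x k := projLE.apply_eq_self hP'P hx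
      simp [hPx]
  have h0 := (hT (P h)).mapL (1 - P)
  rw [show (fun k => (1 - P) (⟪w k, P h⟫_ℂ • x k)) = 0 from funext hterm] at h0
  simpa using h0.unique hasSum_zero

theorem Orthonormal.exists_hasSum_inner_smul {w x : ℕ → H} (hw : Orthonormal ℂ w)
    (hx : Orthonormal ℂ x) :
    ∃ T : H →L[ℂ] H, ∀ h, HasSum (fun k => ⟪w k, h⟫_ℂ • x k) (T h) := by
  classical
  let Lw := hw.orthogonalFamily.linearIsometry.toContinuousLinearMap
  have hcoeff : ∀ h k, (Lw.adjoint h) k = ⟪w k, h⟫_ℂ := fun h k => by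
    have := lp.inner_single_left (𝕜 := ℂ) (G := fun _ : ℕ => ℂ) k 1 (Lw.adjoint h)
    rw [ContinuousLinearMap.adjoint_inner_right] at this
    simpa [Lw, OrthogonalFamily.linearIsometry_apply_single] using this.symm
  refine ⟨hx.orthogonalFamily.linearIsometry.toContinuousLinearMap ∘L Lw.adjoint, fun h => ?_⟩
  simpa [hcoeff] using hx.orthogonalFamily.hasSum_linearIsometry (Lw.adjoint h)

theorem block_apply {E T : H →L[ℂ] H} {x y : ℕ → H} {c : ℕ → ℂ}
    (hT : ∀ h, HasSum (fun j => (c j * ⟪y j, h⟫_ℂ) • x j) (T h)) (hE : IsSelfAdjoint E) {k : ℕ}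
    (hx : ∀ j, E (x j) = if j = k then x j else 0) (hy : E (y k) = y k) (h : H) :
    (E * T * E) h = (c k * ⟪y k, h⟫_ℂ) • x k := by
  refine (((hT (E h)).mapL E).unique (hasSum_single k fun j hj => by simp [hx j, hj])).trans ?_
  simp [hx k, ← ContinuousLinearMap.adjoint_inner_left, hE.adjoint_eq, hy]

theorem hasSum_blocks_and_norm_le {E : ℕ → H →L[ℂ] H} {T : H →L[ℂ] H} {x y : ℕ → H}
    {c : ℕ → ℂ} (hT : ∀ h, HasSum (fun j => (c j * ⟪y j, h⟫_ℂ) • x j) (T h))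
    (hE : ∀ k, IsSelfAdjoint (E k)) (hx : ∀ j k, E k (x j) = if j = k then x j else 0)
    (hy : ∀ k, E k (y k) = y k) (hx₁ : ∀ k, ‖x k‖ = 1) (hy₁ : ∀ k, ‖y k‖ = 1) :
    (∀ h, HasSum (fun k => (E k * T * E k) h) (T h)) ∧ ∀ k, ‖c k‖ ≤ ‖E k * T * E k‖ := by
  have hblock := fun k => block_apply hT (hE k) (fun j => hx j k) (hy k)
  refine ⟨fun h => by simpa only [hblock] using hT h, fun k => ?_⟩
  have := (E k * T * E k).le_opNorm (y k)
  simpa [hblock, inner_self_eq_norm_sq_to_K, hy₁, hx₁, norm_smul] using this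

theorem iMinus_nonneg (𝒩 : Nest H) (N₀ X : H →L[ℂ] H) : 0 ≤ iMinus 𝒩 N₀ X :=
  Real.sInf_nonneg (by rintro _ ⟨M, -, -, rfl⟩; positivity)

theorem iMinus_le {𝒩 : Nest H} {N₀ X M : H →L[ℂ] H} (hM : M ∈ 𝒩.carrier)
    (hMN₀ : projLT M N₀) : iMinus 𝒩 N₀ X ≤ ‖(N₀ - M) * X * (N₀ - M)‖ :=
  csInf_le ⟨0, by rintro _ ⟨M, -, -, rfl⟩; positivity⟩ ⟨M, hM, hMN₀, rfl⟩

end Operators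

section Step

variable {H : Type*} [NormedAddCommGroup H] [InnerProductSpace ℂ H] [CompleteSpace H]

theorem IsStarProjection.norm_apply_le_s13 {P : H →L[ℂ] H} (hP : IsStarProjection P) (h : H) :
    ‖P h‖ ≤ ‖h‖ :=
  (P.le_opNorm h).trans (mul_le_of_le_one_left (norm_nonneg h) (hP.norm_le P))

theorem tendsto_norm_starProjection_mul {Q : ℕ → H →L[ℂ] H} (hQ : ∀ n, IsSelfAdjoint (Q n))
    (hlim : ∀ h, Tendsto (fun n => Q n h) atTop (𝓝 0)) (V : Submodule ℂ H)
    [FiniteDimensional ℂ V] : Tendsto (fun n => ‖V.starProjection * Q n‖) atTop (𝓝 0) := by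
  have hT : Tendsto (fun n => Q n ∘L V.subtypeL) atTop (𝓝 0) :=
    ContinuousLinearMap.tendsto_of_tendsto_apply fun y => by simpa using hlim y
  refine squeeze_zero (fun n => norm_nonneg _) (fun n => ?_)
    (by simpa using (tendsto_norm_zero (E := V →L[ℂ] H)).comp hT)
  calc ‖V.starProjection * Q n‖ = ‖(Q n ∘L V.subtypeL) ∘L V.orthogonalProjectionOnto‖ := by
        rw [← norm_star, star_mul, (hQ n).star_eq, (isSelfAdjoint_starProjection V).star_eq]
        rfl
    _ ≤ ‖Q n ∘L V.subtypeL‖ :=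
        (ContinuousLinearMap.opNorm_comp_le _ _).trans
          (mul_le_of_le_one_right (norm_nonneg _) V.orthogonalProjectionOnto_norm_le)

theorem norm_compression_sub_le_norm {Q Q' P X : H →L[ℂ] H} (hQ : IsStarProjection Q)
    (hQ' : IsSelfAdjoint Q') (hQQ' : projLE Q Q') :
    ‖Q * X * Q‖ - ‖X‖ * ‖P * Q‖ ≤ ‖Q' * X * (Q' - P)‖ := by
  have hcompress : Q * (Q' * X * (Q' - P)) * Q = Q * X * Q - Q * X * (P * Q) := by
    calc Q * (Q' * X * (Q' - P)) * Q = (Q * Q') * X * (Q' * Q) - (Q * Q') * X * (P * Q) := by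
          noncomm_ring
      _ = _ := by rw [hQQ'.mul_eq_left hQ.isSelfAdjoint hQ', hQQ']
  have hQ₁ := hQ.norm_le Q
  have h₁ : ‖Q * (Q' * X * (Q' - P)) * Q‖ ≤ ‖Q' * X * (Q' - P)‖ := calc
    _ ≤ ‖Q‖ * ‖Q' * X * (Q' - P)‖ * ‖Q‖ := norm_mul₃_le
    _ ≤ 1 * ‖Q' * X * (Q' - P)‖ * 1 := by gcongr
    _ = _ := by ring
  have h₂ : ‖Q * X * (P * Q)‖ ≤ ‖X‖ * ‖P * Q‖ := calc
    _ ≤ ‖Q‖ * ‖X‖ * ‖P * Q‖ := norm_mul₃_le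
    _ ≤ 1 * ‖X‖ * ‖P * Q‖ := by gcongr
    _ = _ := by ring
  have h₃ := norm_sub_norm_le (Q * X * Q) (Q * X * (P * Q))
  rw [← hcompress] at h₃
  linarith

variable {Q : ℕ → H →L[ℂ] H} {X : H →L[ℂ] H}

theorem exists_tail_vector_mem_orthogonal (hQ : ∀ n, IsStarProjection (Q n))
    (hanti : ∀ {m n}, m ≤ n → projLE (Q n) (Q m))
    (hlim : ∀ h, Tendsto (fun n => Q n h) atTop (𝓝 0)) (hX : ∀ n, 2 ≤ ‖Q n * X * Q n‖) {p : ℕ}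
    (V : Submodule ℂ H) [FiniteDimensional ℂ V] (hV : ∀ v ∈ V, Q p v = v) :
    ∃ y, Q p y = y ∧ V.starProjection y = 0 ∧ ‖y‖ ≤ 1 ∧ 3 / 2 < ‖Q p (X y)‖ := by
  obtain ⟨m, hm, hpm⟩ := ((((tendsto_norm_starProjection_mul (fun n => (hQ n).isSelfAdjoint)
    hlim V).const_mul ‖X‖).eventually (gt_mem_nhds (by norm_num : ‖X‖ * 0 < 1 / 2))).and
    (eventually_ge_atTop p)).exists
  set P := V.starProjection
  have hP : IsStarProjection P := isStarProjection_starProjection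
  have hPQ : projLE P (Q p) :=
    ContinuousLinearMap.ext fun h => hV _ (V.starProjection_apply_mem h)
  have hR : 3 / 2 < ‖Q p * X * (Q p - P)‖ := by
    linarith [hX m, norm_compression_sub_le_norm (P := P) (X := X) (hQ m) (hQ p).isSelfAdjoint
      (hanti hpm)]
  obtain ⟨h, hh, hRh⟩ := (Q p * X * (Q p - P)).exists_lt_apply_of_lt_opNorm hR
  refine ⟨(Q p - P) h, ?_, ?_, ?_, by simpa [mul_apply_eq_comp] using hRh⟩
  · rw [← mul_apply_eq_comp, mul_sub, (hQ p).isIdempotentElem.eq, hPQ]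
  · rw [← mul_apply_eq_comp, mul_sub, hPQ.mul_eq_left hP.isSelfAdjoint (hQ p).isSelfAdjoint,
      hP.isIdempotentElem.eq, sub_self, zero_apply]
  · exact ((hP.sub_of_mul_eq_right (hQ p) hPQ).norm_apply_le_s13 h).trans hh.le

theorem norm_lt_norm_window_apply_of_small {Q T : H →L[ℂ] H} (hD : IsStarProjection (Q - T))
    {y c : H} {δ : ℝ} (hδ : (3 + 3 * ‖X‖) * δ < 1 / 2) (hy : Q y = y) (hy₁ : ‖y‖ ≤ 1)
    (hXy : 3 / 2 < ‖Q (X y)‖) (hTy : ‖T y‖ < δ) (hTXy : ‖T (X y)‖ < δ) (hc : ‖c‖ ≤ 2 * δ) :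
    ‖(Q - T) (y - c)‖ < ‖(Q - T) (X ((Q - T) (y - c)))‖ := by
  have hv : ‖(Q - T) (y - c)‖ ≤ 1 + 2 * δ := calc
    _ ≤ ‖y - c‖ := hD.norm_apply_le_s13 _
    _ ≤ ‖y‖ + ‖c‖ := norm_sub_le _ _
    _ ≤ 1 + 2 * δ := by linarith
  have hXv : (Q - T) (X ((Q - T) (y - c)))
      = Q (X y) - T (X y) - (Q - T) (X (T y)) - (Q - T) (X ((Q - T) c)) := by
    simp only [map_sub, sub_apply, hy]
  have hXTy : ‖(Q - T) (X (T y))‖ ≤ ‖X‖ * δ := calc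
    _ ≤ ‖X‖ * ‖T y‖ := (hD.norm_apply_le_s13 _).trans (X.le_opNorm _)
    _ ≤ ‖X‖ * δ := by gcongr
  have hXc : ‖(Q - T) (X ((Q - T) c))‖ ≤ ‖X‖ * (2 * δ) := calc
    _ ≤ ‖X‖ * ‖(Q - T) c‖ := (hD.norm_apply_le_s13 _).trans (X.le_opNorm _)
    _ ≤ ‖X‖ * (2 * δ) := by gcongr; exact (hD.norm_apply_le_s13 c).trans hc
  rw [hXv]
  have := norm_sub_norm_le (Q (X y) - T (X y) - (Q - T) (X (T y))) ((Q - T) (X ((Q - T) c)))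
  have := norm_sub_norm_le (Q (X y) - T (X y)) ((Q - T) (X (T y)))
  have := norm_sub_norm_le (Q (X y)) (T (X y))
  nlinarith

/-- For `D = Q p - Q q` with `q` large, `D y` is almost orthogonal to `V`; subtracting `D c`, where
`c ∈ V` solves `P (D c) = P (D y)` for the projection `P` onto `V`, makes it exactly orthogonal at
a small cost. -/
theorem exists_window_vector_of_tail_vector (hQ : ∀ n, IsStarProjection (Q n))
    (hanti : ∀ {m n}, m ≤ n → projLE (Q n) (Q m))
    (hlim : ∀ h, Tendsto (fun n => Q n h) atTop (𝓝 0)) {p : ℕ} (V : Submodule ℂ H)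
    [FiniteDimensional ℂ V] (hV : ∀ v ∈ V, Q p v = v) {y : H} (hy : Q p y = y)
    (hPy : V.starProjection y = 0) (hy₁ : ‖y‖ ≤ 1) (hXy : 3 / 2 < ‖Q p (X y)‖) :
    ∃ q, p < q ∧ ∃ v, (Q p - Q q) v = v ∧ V.starProjection v = 0 ∧
      ‖v‖ < ‖(Q p - Q q) (X v)‖ := by
  set δ := 1 / (8 * (‖X‖ + 1))
  have hδ : 0 < δ := by positivity
  have hδX : (3 + 3 * ‖X‖) * δ < 1 / 2 := by
    have : δ * (‖X‖ + 1) = 1 / 8 := by simp only [δ]; field_simp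
    nlinarith
  have hPQq := (tendsto_norm_starProjection_mul (fun n => (hQ n).isSelfAdjoint) hlim V).eventually
    (gt_mem_nhds (by norm_num : (0 : ℝ) < 1 / 2))
  have hQqy := (hlim y).norm.eventually (gt_mem_nhds (by simpa using hδ))
  have hQqXy := (hlim (X y)).norm.eventually (gt_mem_nhds (by simpa using hδ))
  obtain ⟨q, ⟨⟨hPQq, hQqy⟩, hQqXy⟩, hpq⟩ :=
    (((hPQq.and hQqy).and hQqXy).and (eventually_gt_atTop p)).exists
  set P := V.starProjection
  set D := Q p - Q q
  have hP : IsStarProjection P := isStarProjection_starProjection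
  have hPQ : P * Q p = P :=
    projLE.mul_eq_left hP.isSelfAdjoint (hQ p).isSelfAdjoint
      (ContinuousLinearMap.ext fun h => hV _ (V.starProjection_apply_mem h))
  have hD : IsStarProjection D := (hQ q).sub_of_mul_eq_right (hQ p) (hanti hpq.le)
  have hsmall : ‖P - P * D * P‖ ≤ 1 / 2 := by
    have : P - P * D * P = P * Q q * P := by
      simp only [D, mul_sub, sub_mul, hPQ, hP.isIdempotentElem.eq]
      abel
    rw [this]
    calc ‖P * Q q * P‖ ≤ ‖P * Q q‖ * ‖P‖ := norm_mul_le _ _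
      _ ≤ 1 / 2 * 1 := by gcongr; exact hP.norm_le P
      _ = 1 / 2 := by ring
  obtain ⟨c, -, hPDc, hc⟩ := exists_apply_compression_eq hP.isIdempotentElem hsmall (D y)
  have hPDy : ‖P (D y)‖ < δ := by
    rw [sub_apply, hy, map_sub, hPy, zero_sub, norm_neg]
    exact (hP.norm_apply_le_s13 _).trans_lt hQqy
  refine ⟨q, hpq, D (y - c), ?_, ?_, norm_lt_norm_window_apply_of_small hD hδX hy hy₁ hXy hQqy
    hQqXy (by linarith)⟩
  · rw [← mul_apply_eq_comp, hD.isIdempotentElem.eq]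
  · rw [map_sub, map_sub, hPDc, sub_self]

theorem exists_unit_vector_between_tails (hQ : ∀ n, IsStarProjection (Q n))
    (hanti : ∀ {m n}, m ≤ n → projLE (Q n) (Q m))
    (hlim : ∀ h, Tendsto (fun n => Q n h) atTop (𝓝 0)) (hX : ∀ n, 2 ≤ ‖Q n * X * Q n‖) (p : ℕ)
    (F : Finset H) :
    ∃ q, p < q ∧ ∃ v, (Q p - Q q) v = v ∧ ‖v‖ = 1 ∧ (∀ u ∈ F, ⟪u, v⟫_ℂ = 0) ∧
      1 < ‖(Q p - Q q) (X v)‖ := by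
  set V := Submodule.span ℂ (Q p '' F)
  have : FiniteDimensional ℂ V := FiniteDimensional.span_of_finite ℂ (F.finite_toSet.image _)
  have hV : ∀ v ∈ V, Q p v = v := by
    have hVle : V ≤ LinearMap.range (Q p : H →ₗ[ℂ] H) :=
      Submodule.span_le.mpr (by rintro _ ⟨u, -, rfl⟩; exact ⟨u, rfl⟩)
    intro v hv
    obtain ⟨u, rfl⟩ := hVle hv
    exact congr($((hQ p).isIdempotentElem.eq) u)
  obtain ⟨y, hy, hPy, hy₁, hXy⟩ := exists_tail_vector_mem_orthogonal hQ hanti hlim hX V hV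
  obtain ⟨q, hpq, v, hDv, hPv, hv⟩ :=
    exists_window_vector_of_tail_vector hQ hanti hlim V hV hy hPy hy₁ hXy
  have hv₀ : v ≠ 0 := by
    rintro rfl
    simp at hv
  have hQv : Q p v = v := by
    rw [← hDv, ← mul_apply_eq_comp, mul_sub, (hQ p).isIdempotentElem.eq, hanti hpq.le]
  refine ⟨q, hpq, (‖v‖⁻¹ : ℂ) • v, by rw [map_smul, hDv], norm_smul_inv_norm hv₀,
    fun u hu => ?_, ?_⟩
  · rw [inner_smul_right, ← hQv, ← ContinuousLinearMap.adjoint_inner_left,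
      (hQ p).isSelfAdjoint.adjoint_eq, Submodule.inner_right_of_mem_orthogonal
        (Submodule.subset_span (Set.mem_image_of_mem _ hu))
        (V.starProjection_apply_eq_zero_iff.mp hPv), mul_zero]
  · rw [map_smul, map_smul, norm_smul, norm_inv, Complex.norm_real, norm_norm]
    exact (one_lt_inv_mul₀ (norm_pos_iff.mpr hv₀)).mpr hv

end Step

section Construction

variable {H : Type*} [NormedAddCommGroup H] [InnerProductSpace ℂ H] [CompleteSpace H]

theorem projLE.antisymm {P Q : H →L[ℂ] H} (hP : IsSelfAdjoint P) (hQ : IsSelfAdjoint Q)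
    (hPQ : projLE P Q) (hQP : projLE Q P) : P = Q := by
  rw [← hPQ.mul_eq_left hP hQ, hQP]

theorem IsStarProjection.exists_unit_apply_eq_self {D : H →L[ℂ] H} (hD : IsStarProjection D)
    (hD₀ : D ≠ 0) : ∃ x, D x = x ∧ ‖x‖ = 1 := by
  obtain ⟨h, hh⟩ : ∃ h, D h ≠ 0 := by
    by_contra! h₀
    exact hD₀ (ContinuousLinearMap.ext h₀)
  exact ⟨(‖D h‖⁻¹ : ℂ) • D h, by rw [map_smul, ← mul_apply_eq_comp, hD.isIdempotentElem.eq],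
    norm_smul_inv_norm hh⟩

theorem IsStarProjection.exists_unit_inner_eq_norm {D : H →L[ℂ] H} (hD : IsStarProjection D)
    {z : H} (hz : D z ≠ 0) : ∃ w, D w = w ∧ ‖w‖ = 1 ∧ ⟪w, z⟫_ℂ = ‖D z‖ := by
  refine ⟨(‖D z‖⁻¹ : ℂ) • D z, by rw [map_smul, ← mul_apply_eq_comp, hD.isIdempotentElem.eq],
    norm_smul_inv_norm hz, ?_⟩
  have hDz : ⟪D z, z⟫_ℂ = ‖D z‖ ^ 2 := by
    have hDD : D (D z) = D z := by rw [← mul_apply_eq_comp, hD.isIdempotentElem.eq]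
    calc ⟪D z, z⟫_ℂ = ⟪D (D z), z⟫_ℂ := by rw [hDD]
      _ = ⟪D z, D z⟫_ℂ := hD.isSelfAdjoint.isSymmetric (D z) z
      _ = ‖D z‖ ^ 2 := inner_self_eq_norm_sq_to_K _
  have : (‖D z‖ : ℂ) ≠ 0 := by simpa using hz
  rw [inner_smul_left, hDz, map_inv₀, Complex.conj_ofReal]
  field_simp

structure Block (H : Type*) where
  start : ℕ
  cut₁ : ℕ
  cut₂ : ℕ
  finish : ℕ
  x : H
  v : H
  w : H
  y : H

structure Block.IsGood (M : ℕ → H →L[ℂ] H) (X : H →L[ℂ] H) (b : Block H) : Prop where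
  start_lt : b.start < b.cut₁
  cut₁_lt : b.cut₁ < b.cut₂
  lt_finish : b.cut₂ < b.finish
  x_mem : InWindow (M b.start) (M b.cut₁) b.x
  v_mem : InWindow (M b.cut₁) (M b.cut₂) b.v
  w_mem : InWindow (M b.cut₁) (M b.cut₂) b.w
  y_mem : InWindow (M b.cut₂) (M b.finish) b.y
  norm_x : ‖b.x‖ = 1
  norm_v : ‖b.v‖ = 1
  norm_w : ‖b.w‖ = 1
  norm_y : ‖b.y‖ = 1
  one_lt : 1 < ‖⟪b.w, X b.v⟫_ℂ‖

structure Nest.IncreasesTo (𝒩 : Nest H) (M : ℕ → H →L[ℂ] H) (N₀ : H →L[ℂ] H) : Prop where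
  mem : ∀ n, M n ∈ 𝒩.carrier
  limit_mem : N₀ ∈ 𝒩.carrier
  lt_succ : ∀ n, projLT (M n) (M (n + 1))
  lt_limit : ∀ n, projLT (M n) N₀
  tendsto : ∀ h, Tendsto (fun n => M n h) atTop (𝓝 (N₀ h))

namespace Nest.IncreasesTo

variable {𝒩 : Nest H} {M : ℕ → H →L[ℂ] H} {N₀ X : H →L[ℂ] H}

theorem isStarProjection (hM : 𝒩.IncreasesTo M N₀) (n : ℕ) : IsStarProjection (M n) :=
  Nest.isStarProjection (hM.mem n)

theorem projLE_of_le (hM : 𝒩.IncreasesTo M N₀) {i j : ℕ} (hij : i ≤ j) : projLE (M i) (M j) :=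
  projLE_of_le_of_forall_succ (fun n => (hM.isStarProjection n).isIdempotentElem)
    (fun n => (hM.lt_succ n).1) hij

theorem projLT_of_lt (hM : 𝒩.IncreasesTo M N₀) {i j : ℕ} (hij : i < j) : projLT (M i) (M j) := by
  refine ⟨hM.projLE_of_le hij.le, fun heq => (hM.lt_succ i).2 ?_⟩
  refine projLE.antisymm (hM.isStarProjection _).isSelfAdjoint
    (hM.isStarProjection _).isSelfAdjoint (hM.lt_succ i).1 ?_
  rw [heq]
  exact hM.projLE_of_le hij

theorem tail_isStarProjection (hM : 𝒩.IncreasesTo M N₀) (n : ℕ) :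
    IsStarProjection (N₀ - M n) :=
  (hM.isStarProjection n).sub_of_mul_eq_right (Nest.isStarProjection hM.limit_mem)
    (hM.lt_limit n).1

theorem tail_antitone (hM : 𝒩.IncreasesTo M N₀) {m n : ℕ} (hmn : m ≤ n) :
    projLE (N₀ - M n) (N₀ - M m) := by
  have hN₀ := (Nest.isStarProjection hM.limit_mem)
  have h₁ : M m * N₀ = M m :=
    (hM.lt_limit m).1.mul_eq_left (hM.isStarProjection m).isSelfAdjoint hN₀.isSelfAdjoint
  have h₂ : M m * M n = M m :=
    (hM.projLE_of_le hmn).mul_eq_left (hM.isStarProjection m).isSelfAdjoint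
      (hM.isStarProjection n).isSelfAdjoint
  unfold projLE
  rw [mul_sub, sub_mul, sub_mul, hN₀.isIdempotentElem.eq, (hM.lt_limit n).1, h₁, h₂]
  abel

theorem tail_tendsto (hM : 𝒩.IncreasesTo M N₀) (h : H) :
    Tendsto (fun n => (N₀ - M n) h) atTop (𝓝 0) := by
  simpa using (tendsto_const_nhds (x := N₀ h)).sub (hM.tendsto h)

theorem exists_unit_inWindow (hM : 𝒩.IncreasesTo M N₀) (n : ℕ) :
    ∃ x, InWindow (M n) (M (n + 1)) x ∧ ‖x‖ = 1 := by
  have hD := (hM.isStarProjection n).sub_of_mul_eq_right (hM.isStarProjection (n + 1))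
    (hM.lt_succ n).1
  obtain ⟨x, hx, hx₁⟩ := hD.exists_unit_apply_eq_self (sub_ne_zero.mpr (hM.lt_succ n).2.symm)
  exact ⟨x, (inWindow_iff_sub_apply (hM.isStarProjection n) (hM.isStarProjection (n + 1))
    (hM.lt_succ n).1).mpr hx, hx₁⟩

theorem exists_unit_window_vector (hM : 𝒩.IncreasesTo M N₀)
    (hX : ∀ n, 2 ≤ ‖(N₀ - M n) * X * (N₀ - M n)‖) (p : ℕ) (F : Finset H) :
    ∃ q, p < q ∧ ∃ v, InWindow (M p) (M q) v ∧ ‖v‖ = 1 ∧ (∀ u ∈ F, ⟪u, v⟫_ℂ = 0) ∧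
      1 < ‖(M q - M p) (X v)‖ := by
  obtain ⟨q, hpq, v, hv, hv₁, hvF, hXv⟩ := exists_unit_vector_between_tails
    hM.tail_isStarProjection hM.tail_antitone hM.tail_tendsto hX p F
  rw [sub_sub_sub_cancel_left] at hv hXv
  exact ⟨q, hpq, v, (inWindow_iff_sub_apply (hM.isStarProjection p) (hM.isStarProjection q)
    (hM.projLE_of_le hpq.le)).mpr hv, hv₁, hvF, hXv⟩



theorem exists_isGood_block (hM : 𝒩.IncreasesTo M N₀)
    (hX : ∀ n, 2 ≤ ‖(N₀ - M n) * X * (N₀ - M n)‖) (a : ℕ) (F : Finset H) :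
    ∃ b : Block H, b.IsGood M X ∧ a ≤ b.start ∧ ∀ u ∈ F, ⟪u, X b.v⟫_ℂ = 0 := by
  classical
  obtain ⟨x, hx, hx₁⟩ := hM.exists_unit_inWindow a
  obtain ⟨q, hq, v, hv, hv₁, hvF, hXv⟩ :=
    hM.exists_unit_window_vector hX (a + 1) (F.image X.adjoint)
  obtain ⟨y, hy, hy₁⟩ := hM.exists_unit_inWindow q
  have hD := (hM.isStarProjection (a + 1)).sub_of_mul_eq_right (hM.isStarProjection q)
    (hM.projLE_of_le hq.le)
  obtain ⟨w, hw, hw₁, hwv⟩ := hD.exists_unit_inner_eq_norm (z := X v)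
    (norm_pos_iff.mp (one_pos.trans hXv))
  refine ⟨⟨a, a + 1, q, q + 1, x, v, w, y⟩, ⟨a.lt_succ_self, hq, q.lt_succ_self, hx, hv,
    (inWindow_iff_sub_apply (hM.isStarProjection _) (hM.isStarProjection q)
      (hM.projLE_of_le hq.le)).mpr hw, hy, hx₁, hv₁, hw₁, hy₁, by simpa [hwv] using hXv⟩,
    le_rfl, fun u hu => ?_⟩
  rw [← ContinuousLinearMap.adjoint_inner_left]
  exact hvF _ (Finset.mem_image_of_mem _ hu)

theorem exists_seq_isGood_block (hM : 𝒩.IncreasesTo M N₀)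
    (hX : ∀ n, 2 ≤ ‖(N₀ - M n) * X * (N₀ - M n)‖) :
    ∃ f : ℕ → Block H, (∀ k, (f k).IsGood M X) ∧
      ∀ j k, j < k → (f j).finish ≤ (f k).start ∧ ⟪(f j).w, X (f k).v⟫_ℂ = 0 := by
  classical
  refine exists_seq_of_forall_finset_exists (Block.IsGood M X)
    (fun b b' => b.finish ≤ b'.start ∧ ⟪b.w, X b'.v⟫_ℂ = 0) fun s _ => ?_
  obtain ⟨b, hb, hstart, hF⟩ := hM.exists_isGood_block hX (s.sup Block.finish) (s.image Block.w)
  exact ⟨b, hb, fun a ha => ⟨(Finset.le_sup ha).trans hstart,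
    hF _ (Finset.mem_image_of_mem _ ha)⟩⟩

theorem inWindow_of_isGood (hM : 𝒩.IncreasesTo M N₀) {b : Block H} (hb : b.IsGood M X)
    {c d : ℕ} (hc : c ≤ b.start) (hd : b.finish ≤ d) :
    InWindow (M c) (M d) b.x ∧ InWindow (M c) (M d) b.v ∧ InWindow (M c) (M d) b.w ∧
      InWindow (M c) (M d) b.y := by
  have widen : ∀ {i j z}, c ≤ i → j ≤ d → InWindow (M i) (M j) z → InWindow (M c) (M d) z :=
    fun hi hj hz => hz.mono (hM.isStarProjection _).isSelfAdjoint
      (hM.isStarProjection _).isSelfAdjoint (hM.projLE_of_le hi) (hM.projLE_of_le hj)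
  have := hb.start_lt
  have := hb.cut₁_lt
  have := hb.lt_finish
  exact ⟨widen hc (by omega) hb.x_mem, widen (by omega) (by omega) hb.v_mem,
    widen (by omega) (by omega) hb.w_mem, widen (by omega) hd hb.y_mem⟩

theorem sub_apply_eq_ite (hM : 𝒩.IncreasesTo M N₀) {n : ℕ → ℕ} (hn : StrictMono n) {z : ℕ → H}
    (hz : ∀ j, InWindow (M (n j)) (M (n (j + 1))) (z j)) (j k : ℕ) :
    (M (n (k + 1)) - M (n k)) (z j) = if j = k then z j else 0 := by
  have hSA := fun i => (hM.isStarProjection i).isSelfAdjoint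
  rcases lt_trichotomy j k with hjk | rfl | hkj
  · have hle : n (j + 1) ≤ n k := hn.monotone hjk
    rw [if_neg hjk.ne, sub_apply, (hM.projLE_of_le hle).apply_eq_self (hz j).1,
      ((hM.projLE_of_le hle).trans (hM.projLE_of_le (hn.monotone k.le_succ))).apply_eq_self
        (hz j).1, sub_self]
  · simp [(hz j).1, (hz j).2]
  · have hle : n (k + 1) ≤ n j := hn.monotone hkj
    rw [if_neg hkj.ne', sub_apply, (hM.projLE_of_le hle).apply_eq_zero (hSA _) (hSA _) (hz j).2,
      ((hM.projLE_of_le (hn.monotone k.le_succ)).trans (hM.projLE_of_le hle)).apply_eq_zero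
        (hSA _) (hSA _) (hz j).2, sub_self]

theorem inner_w_apply_v_eq_zero_of_ne (hM : 𝒩.IncreasesTo M N₀) (hXmem : X ∈ nestAlgebra 𝒩)
    {f : ℕ → Block H} (hf : ∀ k, (f k).IsGood M X)
    (hsep : ∀ j k, j < k → (f j).finish ≤ (f k).start ∧ ⟪(f j).w, X (f k).v⟫_ℂ = 0) {j k : ℕ}
    (hjk : j ≠ k) : ⟪(f j).w, X (f k).v⟫_ℂ = 0 := by
  rcases hjk.lt_or_gt with hjk | hkj
  · exact (hsep j k hjk).2
  · have : (f k).cut₂ ≤ (f j).cut₁ := by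
      have := (hsep k j hkj).1
      have := (hf k).lt_finish
      have := (hf j).start_lt
      omega
    exact inner_apply_eq_zero_of_mem_nestAlgebra hXmem (hM.mem _) (hf k).v_mem.1
      ((hM.projLE_of_le this).apply_eq_zero (hM.isStarProjection _).isSelfAdjoint
        (hM.isStarProjection _).isSelfAdjoint (hf j).w_mem.2)

theorem exists_blockDiagonal (hM : 𝒩.IncreasesTo M N₀) (hXmem : X ∈ nestAlgebra 𝒩)
    (hX : ∀ n, 2 ≤ ‖(N₀ - M n) * X * (N₀ - M n)‖) :
    ∃ A ∈ nestAlgebra 𝒩, ∃ B ∈ nestAlgebra 𝒩, ∃ n : ℕ → ℕ, StrictMono n ∧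
      (∀ h, HasSum (fun k => ((M (n (k + 1)) - M (n k)) * (A * X * B) *
        (M (n (k + 1)) - M (n k))) h) ((A * X * B) h)) ∧
      ∀ k, 1 < ‖(M (n (k + 1)) - M (n k)) * (A * X * B) * (M (n (k + 1)) - M (n k))‖ := by
  obtain ⟨f, hf, hsep⟩ := hM.exists_seq_isGood_block hX
  set n := fun k => (f k).start
  have hn : StrictMono n := strictMono_nat_of_lt_succ fun k =>
    ((hf k).start_lt.trans ((hf k).cut₁_lt.trans (hf k).lt_finish)).trans_le
      (hsep k (k + 1) k.lt_succ_self).1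
  have hwin := fun k => hM.inWindow_of_isGood (hf k) le_rfl (hsep k (k + 1) k.lt_succ_self).1
  have horth := fun {z : ℕ → H} (hz : ∀ k, InWindow (M (n k)) (M (n (k + 1))) (z k)) =>
    orthonormal_of_inWindow (fun i => (hM.isStarProjection i).isSelfAdjoint) hM.projLE_of_le hn hz
  obtain ⟨A, hA⟩ := (horth (fun k => (hwin k).2.2.1) fun k => (hf k).norm_w)
    |>.exists_hasSum_inner_smul (horth (fun k => (hwin k).1) fun k => (hf k).norm_x)
  obtain ⟨B, hB⟩ := (horth (fun k => (hwin k).2.2.2) fun k => (hf k).norm_y)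
    |>.exists_hasSum_inner_smul (horth (fun k => (hwin k).2.1) fun k => (hf k).norm_v)
  obtain ⟨hsum, hnorm⟩ := hasSum_blocks_and_norm_le (hasSum_inner_smul_mul hA hB
    fun j k => hM.inner_w_apply_v_eq_zero_of_ne hXmem hf hsep)
    (fun k => (hM.isStarProjection _).isSelfAdjoint.sub (hM.isStarProjection _).isSelfAdjoint)
    (hM.sub_apply_eq_ite hn fun k => (hwin k).1)
    (fun k => by simpa using hM.sub_apply_eq_ite hn (fun k => (hwin k).2.2.2) k k)
    (fun k => (hf k).norm_x) (fun k => (hf k).norm_y)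
  exact ⟨A, mem_nestAlgebra_of_hasSum hA fun k => ⟨_, hM.mem (f k).cut₁, (hf k).x_mem.1,
    (hf k).w_mem.2⟩, B, mem_nestAlgebra_of_hasSum hB fun k => ⟨_, hM.mem (f k).cut₂,
    (hf k).v_mem.1, (hf k).y_mem.2⟩, n, hn, hsum, fun k => (hf k).one_lt.trans_le (hnorm k)⟩

end Nest.IncreasesTo

end Construction

universe u

variable {H : Type u} [NormedAddCommGroup H] [InnerProductSpace ℂ H] [CompleteSpace H]
  [TopologicalSpace.SeparableSpace H]

theorem statement13_general (𝒩 : Nest H) (N₀ : H →L[ℂ] H) (hN₀ : N₀ ∈ 𝒩.carrier)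
    (M : ℕ → H →L[ℂ] H) (hMmem : ∀ n, M n ∈ 𝒩.carrier)
    (hMmono : ∀ n, projLT (M n) (M (n + 1))) (hMlt : ∀ n, projLT (M n) N₀)
    (hMconv : ∀ h : H, Filter.Tendsto (fun n => M n h) Filter.atTop (nhds (N₀ h)))
    (X : H →L[ℂ] H) (hX : X ∈ nestAlgebra 𝒩) (hXnot : iMinus 𝒩 N₀ X ≠ 0) :
    ∃ A ∈ nestAlgebra 𝒩, ∃ B ∈ nestAlgebra 𝒩, ∃ Nk : ℕ → H →L[ℂ] H,
      (∀ k, Nk k ∈ 𝒩.carrier) ∧ (∀ k, projLT (Nk k) (Nk (k + 1))) ∧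
      (∀ k, projLT (Nk k) N₀) ∧
      (∀ h : H, Filter.Tendsto (fun k => Nk k h) Filter.atTop (nhds (N₀ h))) ∧
      (∀ h : H,
        HasSum (fun k => ((Nk (k + 1) - Nk k) * (A * X * B) * (Nk (k + 1) - Nk k)) h)
          ((A * X * B) h)) ∧
      ∀ k, 1 < ‖(Nk (k + 1) - Nk k) * (A * X * B) * (Nk (k + 1) - Nk k)‖ := by
  have hM : 𝒩.IncreasesTo M N₀ := ⟨hMmem, hN₀, hMmono, hMlt, hMconv⟩
  have hε : 0 < iMinus 𝒩 N₀ X := (iMinus_nonneg 𝒩 N₀ X).lt_of_ne' hXnot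
  set γ : ℂ := ((2 / iMinus 𝒩 N₀ X : ℝ) : ℂ)
  have htail : ∀ n, 2 ≤ ‖(N₀ - M n) * (γ • X) * (N₀ - M n)‖ := fun n => by
    rw [mul_smul_comm, smul_mul_assoc, norm_smul, Complex.norm_real,
      Real.norm_of_nonneg (by positivity)]
    calc (2 : ℝ) = 2 / iMinus 𝒩 N₀ X * iMinus 𝒩 N₀ X := by field_simp
      _ ≤ 2 / iMinus 𝒩 N₀ X * ‖(N₀ - M n) * X * (N₀ - M n)‖ := by
        gcongr
        exact iMinus_le (hMmem n) (hMlt n)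
  obtain ⟨A, hA, B, hB, n, hn, hsum, hnorm⟩ :=
    hM.exists_blockDiagonal (Subalgebra.smul_mem _ hX γ) htail
  have hAXB : γ • A * X * B = A * (γ • X) * B := by
    rw [smul_mul_assoc, smul_mul_assoc, mul_smul_comm, smul_mul_assoc]
  refine ⟨γ • A, Subalgebra.smul_mem _ hA γ, B, hB, fun k => M (n k), fun k => hMmem _,
    fun k => hM.projLT_of_lt (hn k.lt_succ_self), fun k => hMlt _,
    fun h => (hMconv h).comp hn.tendsto_atTop, ?_, ?_⟩ <;> simpa only [hAXB]

/-- if `X ∈ T(𝒩)` and `X ∉ I⁻_{N₀}` where `N₀ = N₀⁻ > 0` (witnessed by a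
strictly increasing sequence `M_n` of nest projections converging strongly to `N₀`),
then there are `A, B ∈ T(𝒩)` and a sequence `N_k` in `𝒩` strictly increasing to `N₀`
such that `AXB` is the (strong) sum of its diagonal blocks
`(N_{k+1} - N_k) AXB (N_{k+1} - N_k)`, each of norm greater than `1`. -/
theorem statement13 (𝒩 : Nest H) (N₀ : H →L[ℂ] H) (hN₀ : N₀ ∈ 𝒩.carrier)
    (hN₀ne : N₀ ≠ 0) (M : ℕ → H →L[ℂ] H) (hMmem : ∀ n, M n ∈ 𝒩.carrier)
    (hMmono : ∀ n, projLT (M n) (M (n + 1))) (hMlt : ∀ n, projLT (M n) N₀)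
    (hMconv : ∀ h : H, Filter.Tendsto (fun n => M n h) Filter.atTop (nhds (N₀ h)))
    (X : H →L[ℂ] H) (hX : X ∈ nestAlgebra 𝒩) (hXnot : iMinus 𝒩 N₀ X ≠ 0) :
    ∃ A ∈ nestAlgebra 𝒩, ∃ B ∈ nestAlgebra 𝒩, ∃ Nk : ℕ → H →L[ℂ] H,
      (∀ k, Nk k ∈ 𝒩.carrier) ∧ (∀ k, projLT (Nk k) (Nk (k + 1))) ∧
      (∀ k, projLT (Nk k) N₀) ∧
      (∀ h : H, Filter.Tendsto (fun k => Nk k h) Filter.atTop (nhds (N₀ h))) ∧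
      (∀ h : H,
        HasSum (fun k => ((Nk (k + 1) - Nk k) * (A * X * B) * (Nk (k + 1) - Nk k)) h)
          ((A * X * B) h)) ∧
      ∀ k, 1 < ‖(Nk (k + 1) - Nk k) * (A * X * B) * (Nk (k + 1) - Nk k)‖ :=
  statement13_general 𝒩 N₀ hN₀ M hMmem hMmono hMlt hMconv X hX hXnot
end

section
/- Let N be a nest, (E_i)_{i∈ℕ} pairwise orthogonal intervals of N, Δ_σ(X) := Σ_{i∈σ} E_i X E_i for σ ⊆ ℕ, and Δ := Δ_ℕ. If P is a primitive ideal of T(N) with ker Δ ⊆ P, then Σ := {σ ⊆ ℕ : ker Δ_σ ⊆ P} is an ultrafilter on ℕ. -/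
/-! For `σ ⊆ ℕ` let `p σ` be the orthogonal projection onto the closed span of the ranges
of the `E i`, `i ∈ σ`. It commutes with every nest projection, so lies in `T(𝒩)`, and both
`E i * p σ` and `p σ * E i` are `E i` or `0` according as `i ∈ σ` or not. Hence modulo
`ker Δ ⊆ P` the map `σ ↦ p σ` is a Boolean-algebra homomorphism into idempotents that are
central modulo `P`, and `ker Δ_σ ⊆ P` iff `1 - p σ ∈ P`. Writing `P = {x | x T(𝒩) ⊆ L}` for a
maximal left ideal `L`, such an idempotent acts on the simple module `T(𝒩) ⧸ L` as `0` or `1`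
(Schur), so every `p σ` is `0` or `1` modulo `P`: this is exactly the ultrafilter property. -/

noncomputable section

universe u

variable {H : Type u} [NormedAddCommGroup H] [InnerProductSpace ℂ H] [CompleteSpace H]
  [TopologicalSpace.SeparableSpace H]

/-- An interval of the nest: a difference `N - M` of nest projections `M ≤ N`. -/
def IsIntervalOf (𝒩 : Nest H) (E : H →L[ℂ] H) : Prop :=
  ∃ M ∈ 𝒩.carrier, ∃ N ∈ 𝒩.carrier, projLE M N ∧ E = N - M

/-- The kernel of the block-diagonal expectation `Δ_σ(X) = Σ_{i ∈ σ} E_i X E_i`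
(for pairwise orthogonal intervals `E_i`, `Δ_σ(X) = 0` iff every block
`E_i X E_i` with `i ∈ σ` vanishes). -/
def kerDelta (𝒩 : Nest H) (E : ℕ → H →L[ℂ] H) (σ : Set ℕ) :
    Set (nestAlgebra 𝒩) :=
  {X | ∀ i ∈ σ, E i * (X : H →L[ℂ] H) * E i = 0}

open Set

namespace Ideal

variable {R : Type*} [Ring R]

def twoSidedCore (L : Ideal R) : TwoSidedIdeal R :=
  .mk' {x | ∀ r, x * r ∈ L} (by simp)
    (fun hx hy r => by rw [add_mul]; exact L.add_mem (hx r) (hy r))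
    (fun hx r => by rw [neg_mul]; exact L.neg_mem (hx r))
    (fun {x _} hy r => by rw [mul_assoc]; exact L.mul_mem_left x (hy r))
    (fun {_ y} hx r => by rw [mul_assoc]; exact hx (y * r))

variable {L : Ideal R}

theorem mem_twoSidedCore {x : R} : x ∈ L.twoSidedCore ↔ ∀ r, x * r ∈ L :=
  TwoSidedIdeal.mem_mk' ..

theorem coe_twoSidedCore : (L.twoSidedCore : Set R) = {x | ∀ r, x * r ∈ L} :=
  TwoSidedIdeal.coe_mk' ..

theorem one_notMem_twoSidedCore (hL : L ≠ ⊤) : (1 : R) ∉ L.twoSidedCore := fun h =>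
  hL ((eq_top_iff_one L).2 (by simpa using mem_twoSidedCore.1 h 1))

/-- Left multiplication by `e` is an idempotent endomorphism of the simple module `R ⧸ L`, so by
Schur it is `0` or `1`; its kernel `{x | e * x ∈ L}` is `⊤` or `L`. -/
theorem IsMaximal.mem_or_one_sub_mem_twoSidedCore (hL : L.IsMaximal) {e : R}
    (he : IsIdempotentElem e) (hcomm : ∀ r, e * r - r * e ∈ L.twoSidedCore) :
    e ∈ L.twoSidedCore ∨ 1 - e ∈ L.twoSidedCore := by
  have hcommL : ∀ r x, e * (r * x) - r * (e * x) ∈ L := fun r x => by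
    simpa only [sub_mul, mul_assoc] using mem_twoSidedCore.1 (hcomm r) x
  let K : Ideal R :=
    { carrier := {x | e * x ∈ L}
      add_mem' := fun hx hy => by
        show e * (_ + _) ∈ L
        rw [mul_add]
        exact L.add_mem hx hy
      zero_mem' := by simp
      smul_mem' := fun r x hx => by
        simpa using L.add_mem (hcommL r x) (L.mul_mem_left r hx) }
  rcases eq_or_ne K ⊤ with hK | hK
  · exact .inl <| mem_twoSidedCore.2 fun x => (hK ▸ Submodule.mem_top : x ∈ K)
  · have hLK : L = K := hL.eq_of_le hK fun x hx => L.mul_mem_left e hx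
    refine .inr <| mem_twoSidedCore.2 fun x => hLK ▸ ?_
    show e * ((1 - e) * x) ∈ L
    rw [← mul_assoc, mul_sub, mul_one, he.eq, sub_self, zero_mul]
    exact L.zero_mem

end Ideal

namespace TwoSidedIdeal

variable {A α : Type*} [Ring A] (I : TwoSidedIdeal A)

/-- Modulo `I`, `p` is a Boolean-algebra homomorphism with values in `{0, 1}`, i.e. the indicator
of an ultrafilter. -/
theorem exists_ultrafilter_one_sub_mem_iff (hI : (1 : A) ∉ I) (p : Set α → A)
    (huniv : 1 - p univ ∈ I) (hinter : ∀ s t, p (s ∩ t) - p s * p t ∈ I)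
    (hcompl : ∀ s, 1 - p s - p sᶜ ∈ I) (hdich : ∀ s, p s ∈ I ∨ 1 - p s ∈ I) :
    ∃ U : Ultrafilter α, ∀ s, 1 - p s ∈ I ↔ s ∈ U := by
  have inter_mem {s t : Set α} (hs : 1 - p s ∈ I) (ht : 1 - p t ∈ I) :
      1 - p (s ∩ t) ∈ I := by
    convert I.sub_mem (I.add_mem hs (I.mul_mem_left (p s) _ ht)) (hinter s t) using 1
    noncomm_ring
  have mono {s t : Set α} (hst : s ⊆ t) (hs : 1 - p s ∈ I) : 1 - p t ∈ I := by
    refine (hdich t).resolve_left fun ht => hI ?_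
    have hps : p s ∈ I := by
      simpa [inter_eq_left.2 hst] using I.add_mem (hinter s t) (I.mul_mem_left (p s) _ ht)
    simpa using I.add_mem hs hps
  let F : Filter α :=
    { sets := {s | 1 - p s ∈ I}
      univ_sets := huniv
      sets_of_superset := fun hs hst => mono hst hs
      inter_sets := inter_mem }
  have compl_iff (s : Set α) : sᶜ ∉ F ↔ s ∈ F := by
    refine ⟨fun hsc => (hdich s).resolve_left fun hs => hsc ?_, fun hs hsc => hI ?_⟩
    · show 1 - p sᶜ ∈ I
      convert I.add_mem (hcompl s) hs using 1
      abel
    · convert I.sub_mem (I.add_mem hs hsc) (hcompl s) using 1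
      abel
  exact ⟨.ofComplNotMemIff F compl_iff, fun s => Iff.rfl⟩

end TwoSidedIdeal

theorem IsSelfAdjoint.mul_rev_eq_star {R : Type*} [Mul R] [StarMul R] {a b c : R}
    (ha : IsSelfAdjoint a) (hb : IsSelfAdjoint b) (h : a * b = c) : b * a = star c := by
  rw [← h, star_mul, ha.star_eq, hb.star_eq]

theorem Submodule.commute_starProjection {𝕜 E : Type*} [RCLike 𝕜] [NormedAddCommGroup E]
    [InnerProductSpace 𝕜 E] [CompleteSpace E] {K : Submodule 𝕜 E} [K.HasOrthogonalProjection]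
    {T : E →L[𝕜] E} (hT : IsSelfAdjoint T) (hK : ∀ x ∈ K, T x ∈ K) :
    Commute T K.starProjection := by
  have h : K.starProjection * T * K.starProjection = T * K.starProjection := by
    ext x
    exact K.starProjection_eq_self_iff.2 (hK _ (K.starProjection_apply_mem x))
  have h' := congrArg star h
  simp only [star_mul, hT.star_eq, (isSelfAdjoint_starProjection K).star_eq, ← mul_assoc] at h'
  exact h.symm.trans h'

variable {V : Type*} [NormedAddCommGroup V] [InnerProductSpace ℂ V]

section BlockSpan

variable (E : ℕ → V →L[ℂ] V)

def blockSpan (σ : Set ℕ) : Submodule ℂ V :=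
  (⨆ i ∈ σ, (E i).range).topologicalClosure

variable {E} {σ : Set ℕ} {i : ℕ}

theorem range_le_blockSpan (hi : i ∈ σ) : (E i).range ≤ blockSpan E σ :=
  (le_biSup (fun j => (E j).range) hi).trans (Submodule.le_topologicalClosure _)

theorem blockSpan_le_ker (horth : ∀ i j, i ≠ j → E i * E j = 0) (hi : i ∉ σ) :
    blockSpan E σ ≤ (E i).ker := by
  refine Submodule.topologicalClosure_minimal _ (iSup₂_le fun j hj => ?_) (E i).isClosed_ker
  rintro _ ⟨y, rfl⟩
  show (E i * E j) y = 0
  rw [horth i j (ne_of_mem_of_not_mem hj hi).symm, zero_apply]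

theorem apply_mem_blockSpan {T : V →L[ℂ] V} (hT : ∀ i, Commute T (E i)) {x : V}
    (hx : x ∈ blockSpan E σ) : T x ∈ blockSpan E σ := by
  suffices blockSpan E σ ≤ (blockSpan E σ).comap (T : V →ₗ[ℂ] V) from this hx
  refine Submodule.topologicalClosure_minimal _ (iSup₂_le fun j hj => ?_)
    ((Submodule.isClosed_topologicalClosure _).preimage T.continuous)
  rintro _ ⟨y, rfl⟩
  show (T * E j) y ∈ blockSpan E σ
  rw [(hT j).eq]
  exact range_le_blockSpan hj ⟨T y, rfl⟩

end BlockSpan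

variable [CompleteSpace V]

theorem Nest.commute (𝒩 : Nest V) {Q R : V →L[ℂ] V} (hQ : Q ∈ 𝒩.carrier)
    (hR : R ∈ 𝒩.carrier) : Commute Q R := by
  have hQ' := (𝒩.isProj Q hQ).1
  have hR' := (𝒩.isProj R hR).1
  rcases 𝒩.chain Q hQ R hR with h | h
  · rw [Commute, SemiconjBy, hR'.mul_rev_eq_star hQ' h, hQ'.star_eq, h]
  · rw [Commute, SemiconjBy, h, hQ'.mul_rev_eq_star hR' h, hR'.star_eq]

theorem IsIntervalOf.isSelfAdjoint {𝒩 : Nest V} {e : V →L[ℂ] V} (he : IsIntervalOf 𝒩 e) :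
    IsSelfAdjoint e := by
  obtain ⟨M, hM, N, hN, -, rfl⟩ := he
  exact (𝒩.isProj N hN).1.sub (𝒩.isProj M hM).1

theorem IsIntervalOf.commute {𝒩 : Nest V} {e Q : V →L[ℂ] V} (he : IsIntervalOf 𝒩 e)
    (hQ : Q ∈ 𝒩.carrier) : Commute Q e := by
  obtain ⟨M, hM, N, hN, -, rfl⟩ := he
  exact (𝒩.commute hQ hN).sub_right (𝒩.commute hQ hM)

theorem mem_nestAlgebra_of_commute {𝒩 : Nest V} {X : V →L[ℂ] V}
    (hX : ∀ Q ∈ 𝒩.carrier, Commute Q X) : X ∈ nestAlgebra 𝒩 := fun Q hQ => by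
  show (1 - Q) * X * Q = 0
  rw [mul_assoc, ← (hX Q hQ).eq, ← mul_assoc, sub_mul, one_mul, (𝒩.isProj Q hQ).2, sub_self,
    zero_mul]

section BlockProjection

variable (E : ℕ → V →L[ℂ] V)

instance (σ : Set ℕ) : (blockSpan E σ).HasOrthogonalProjection := by
  unfold blockSpan; infer_instance

def blockProj (σ : Set ℕ) : V →L[ℂ] V :=
  (blockSpan E σ).starProjection

variable {E} {σ : Set ℕ} {i : ℕ}

theorem blockProj_mul_of_mem (hi : i ∈ σ) : blockProj E σ * E i = E i := by
  ext x
  exact (blockSpan E σ).starProjection_eq_self_iff.2 (range_le_blockSpan hi ⟨x, rfl⟩)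

theorem mul_blockProj_of_notMem (horth : ∀ i j, i ≠ j → E i * E j = 0) (hi : i ∉ σ) :
    E i * blockProj E σ = 0 := by
  ext x
  exact blockSpan_le_ker horth hi ((blockSpan E σ).starProjection_apply_mem x)

variable (E) in
theorem isSelfAdjoint_blockProj (σ : Set ℕ) : IsSelfAdjoint (blockProj E σ) :=
  isSelfAdjoint_starProjection _

variable (E) in
theorem isIdempotentElem_blockProj (σ : Set ℕ) : IsIdempotentElem (blockProj E σ) :=
  (blockSpan E σ).isIdempotentElem_starProjection

open Classical in
theorem blockProj_mul (hsa : ∀ i, IsSelfAdjoint (E i))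
    (horth : ∀ i j, i ≠ j → E i * E j = 0) (σ : Set ℕ) (i : ℕ) :
    blockProj E σ * E i = if i ∈ σ then E i else 0 := by
  split_ifs with hi
  · exact blockProj_mul_of_mem hi
  · rw [(hsa i).mul_rev_eq_star (isSelfAdjoint_blockProj E σ)
      (mul_blockProj_of_notMem horth hi), star_zero]

open Classical in
theorem mul_blockProj (hsa : ∀ i, IsSelfAdjoint (E i))
    (horth : ∀ i j, i ≠ j → E i * E j = 0) (σ : Set ℕ) (i : ℕ) :
    E i * blockProj E σ = if i ∈ σ then E i else 0 := by
  split_ifs with hi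
  · rw [(isSelfAdjoint_blockProj E σ).mul_rev_eq_star (hsa i) (blockProj_mul_of_mem hi),
      (hsa i).star_eq]
  · exact mul_blockProj_of_notMem horth hi

open Classical in
theorem mul_blockProj_mul_mul (hsa : ∀ i, IsSelfAdjoint (E i))
    (horth : ∀ i j, i ≠ j → E i * E j = 0) (X : V →L[ℂ] V) :
    E i * (blockProj E σ * X) * E i = if i ∈ σ then E i * X * E i else 0 := by
  rw [← mul_assoc, mul_blockProj hsa horth]
  split_ifs <;> simp

open Classical in
theorem mul_mul_blockProj_mul (hsa : ∀ i, IsSelfAdjoint (E i))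
    (horth : ∀ i j, i ≠ j → E i * E j = 0) (X : V →L[ℂ] V) :
    E i * (X * blockProj E σ) * E i = if i ∈ σ then E i * X * E i else 0 := by
  rw [mul_assoc, mul_assoc, blockProj_mul hsa horth]
  split_ifs <;> simp [mul_assoc]

open Classical in
theorem mul_blockProj_mul_self (hsa : ∀ i, IsSelfAdjoint (E i))
    (horth : ∀ i j, i ≠ j → E i * E j = 0) :
    E i * blockProj E σ * E i = if i ∈ σ then E i * E i else 0 := by
  rw [mul_blockProj hsa horth]
  split_ifs <;> simp

end BlockProjection

section NestAlgebra

variable {𝒩 : Nest V} {E : ℕ → V →L[ℂ] V}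

theorem blockProj_mem_nestAlgebra (hE : ∀ i, IsIntervalOf 𝒩 (E i)) (σ : Set ℕ) :
    blockProj E σ ∈ nestAlgebra 𝒩 :=
  mem_nestAlgebra_of_commute fun Q hQ => Submodule.commute_starProjection (𝒩.isProj Q hQ).1
    fun _ => apply_mem_blockSpan fun i => (hE i).commute hQ

def nestBlockProj (hE : ∀ i, IsIntervalOf 𝒩 (E i)) (σ : Set ℕ) : nestAlgebra 𝒩 :=
  ⟨blockProj E σ, blockProj_mem_nestAlgebra hE σ⟩

theorem isIdempotentElem_nestBlockProj (hE : ∀ i, IsIntervalOf 𝒩 (E i)) (σ : Set ℕ) :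
    IsIdempotentElem (nestBlockProj hE σ) :=
  Subtype.ext (isIdempotentElem_blockProj E σ)

theorem mem_kerDelta_univ {X : nestAlgebra 𝒩} :
    X ∈ kerDelta 𝒩 E univ ↔ ∀ i, E i * (X : V →L[ℂ] V) * E i = 0 := by
  simp [kerDelta]

variable (hE : ∀ i, IsIntervalOf 𝒩 (E i))

theorem nestBlockProj_mul_sub_mul_mem_kerDelta (horth : ∀ i j, i ≠ j → E i * E j = 0) (σ : Set ℕ)
    (X : nestAlgebra 𝒩) :
    nestBlockProj hE σ * X - X * nestBlockProj hE σ ∈ kerDelta 𝒩 E univ := by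
  have hsa i := (hE i).isSelfAdjoint
  refine mem_kerDelta_univ.2 fun i => ?_
  simp [nestBlockProj, mul_sub, sub_mul, mul_blockProj_mul_mul hsa horth,
    mul_mul_blockProj_mul hsa horth]

theorem nestBlockProj_inter_sub_mul_mem_kerDelta (horth : ∀ i j, i ≠ j → E i * E j = 0)
    (s t : Set ℕ) :
    nestBlockProj hE (s ∩ t) - nestBlockProj hE s * nestBlockProj hE t ∈
      kerDelta 𝒩 E univ := by
  have hsa i := (hE i).isSelfAdjoint
  refine mem_kerDelta_univ.2 fun i => ?_
  by_cases hs : i ∈ s <;> by_cases ht : i ∈ t <;>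
    simp [nestBlockProj, mul_sub, sub_mul, mul_blockProj_mul_mul hsa horth,
      mul_blockProj_mul_self hsa horth, hs, ht]

theorem one_sub_nestBlockProj_sub_compl_mem_kerDelta (horth : ∀ i j, i ≠ j → E i * E j = 0)
    (s : Set ℕ) :
    1 - nestBlockProj hE s - nestBlockProj hE sᶜ ∈ kerDelta 𝒩 E univ := by
  have hsa i := (hE i).isSelfAdjoint
  refine mem_kerDelta_univ.2 fun i => ?_
  by_cases hi : i ∈ s <;>
    simp [nestBlockProj, mul_sub, sub_mul, mul_blockProj_mul_self hsa horth, hi]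

theorem one_sub_nestBlockProj_mem_kerDelta (horth : ∀ i j, i ≠ j → E i * E j = 0) (σ : Set ℕ) :
    1 - nestBlockProj hE σ ∈ kerDelta 𝒩 E σ := by
  have hsa i := (hE i).isSelfAdjoint
  intro i hi
  simp [nestBlockProj, mul_sub, sub_mul, mul_blockProj_mul_self hsa horth, hi]

theorem nestBlockProj_mul_mem_kerDelta_univ (horth : ∀ i j, i ≠ j → E i * E j = 0)
    {σ : Set ℕ} {X : nestAlgebra 𝒩} (hX : X ∈ kerDelta 𝒩 E σ) :
    nestBlockProj hE σ * X ∈ kerDelta 𝒩 E univ := by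
  have hsa i := (hE i).isSelfAdjoint
  refine mem_kerDelta_univ.2 fun i => ?_
  by_cases hi : i ∈ σ <;> simp [nestBlockProj, mul_blockProj_mul_mul hsa horth, hi, hX i]

theorem kerDelta_subset_iff_one_sub_nestBlockProj_mem (horth : ∀ i j, i ≠ j → E i * E j = 0)
    {I : TwoSidedIdeal (nestAlgebra 𝒩)} (hI : kerDelta 𝒩 E univ ⊆ I) (σ : Set ℕ) :
    kerDelta 𝒩 E σ ⊆ I ↔ 1 - nestBlockProj hE σ ∈ I := by
  refine ⟨fun h => h (one_sub_nestBlockProj_mem_kerDelta hE horth σ), fun h X hX => ?_⟩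
  have := I.add_mem (I.mul_mem_right _ X h) (hI (nestBlockProj_mul_mem_kerDelta_univ hE horth hX))
  rwa [← add_mul, sub_add_cancel, one_mul] at this

end NestAlgebra

/-- if `(E_i)` are pairwise orthogonal intervals of `𝒩` and `P` is a
primitive ideal of `T(𝒩)` containing `ker Δ` (where `Δ = Δ_ℕ`), then
`Σ = {σ ⊆ ℕ : ker Δ_σ ⊆ P}` is an ultrafilter on `ℕ`. -/
theorem statement18 (𝒩 : Nest H) (E : ℕ → H →L[ℂ] H)
    (hE : ∀ i, IsIntervalOf 𝒩 (E i)) (horth : ∀ i j, i ≠ j → E i * E j = 0)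
    (P : Set (nestAlgebra 𝒩)) (hP : IsLeftPrimitive (nestAlgebra 𝒩) P)
    (hker : kerDelta 𝒩 E Set.univ ⊆ P) :
    ∃ U : Ultrafilter ℕ, ∀ σ : Set ℕ, kerDelta 𝒩 E σ ⊆ P ↔ σ ∈ U := by
  obtain ⟨L, hL, rfl⟩ := hP
  rw [← Ideal.coe_twoSidedCore] at hker ⊢
  obtain ⟨U, hU⟩ := L.twoSidedCore.exists_ultrafilter_one_sub_mem_iff
    (Ideal.one_notMem_twoSidedCore hL.ne_top) (nestBlockProj hE)
    (hker (one_sub_nestBlockProj_mem_kerDelta hE horth univ))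
    (fun s t => hker (nestBlockProj_inter_sub_mul_mem_kerDelta hE horth s t))
    (fun s => hker (one_sub_nestBlockProj_sub_compl_mem_kerDelta hE horth s))
    (fun s => hL.mem_or_one_sub_mem_twoSidedCore (isIdempotentElem_nestBlockProj hE s)
      fun X => hker (nestBlockProj_mul_sub_mul_mem_kerDelta hE horth s X))
  exact ⟨U, fun σ => (kerDelta_subset_iff_one_sub_nestBlockProj_mem hE horth hker σ).trans (hU σ)⟩
end
end
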